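/- arXiv:2410.23265 — 4 statements merged into one kernel-verified Lean document; each statement's English description precedes it below -/
import Mathlib

section
/- For every ℓ ≥ 1, the length of the longest strictly decreasing subsequence of the digit-reversal permutation R_k(ℓ) equals (k+1)·k^{ℓ/2 − 1} − 1 if ℓ is even, and equals 2·k^{(ℓ−1)/2} − 1 if ℓ is odd. -/
/-- `digitRev k ℓ n` : the radix-`k` digit reversal of `n`, viewed as a string of exactly
`ℓ` base-`k` digits (padded with leading zeros). -/
def digitRev (k : ℕ) : ℕ → ℕ → ℕ
  | 0, _ => 0
  | ℓ + 1, n => n % k * k ^ ℓ + digitRev k ℓ (n / k)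

/-- `f : Fin M → ℕ` has a strictly decreasing subsequence of length `d`. -/
def HasDecSubseq (M : ℕ) (f : Fin M → ℕ) (d : ℕ) : Prop :=
  ∃ pos : Fin d → Fin M, StrictMono pos ∧ StrictAnti (fun t => f (pos t))

/-!
Write an `(ℓ + 2)`-digit number as `frame k ℓ x t y`, with leading digit `x`, middle block `t`
and last digit `y`; its digit reversal is `frame k ℓ y (rev t) x`. So a decreasing subsequence of
`R_k(ℓ + 2)` is a sequence of triples `(x, t, y)` increasing lexicographically while the triples
`(y, rev t, x)` decrease. Let `D` be the answer at level `ℓ`, so that `D' = k D + k - 1` is the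
answer at level `ℓ + 2`.

Upper bound: the potential `Φ (frame k ℓ x t y) = (x + k - 1 - y) (D + 1) + Φ t` rises by at
least `2` between any two terms of a decreasing subsequence and satisfies
`Φ n + Φ (rev n) = 2 D' - 2`, so halving it maps the subsequence injectively into `[0, D')`.
For the induction one also needs that `Φ` drops by less than `D'` when `n` increases.

Lower bound: if `S` is a decreasing family at level `ℓ` avoiding `0`, then the `k` copies
`frame k ℓ x t (k - 1 - x)` (`t ∈ S`, `x < k`), linked by the `k - 1` numbers
`frame k ℓ x 0 (k - x)`, form one of size `k |S| + k - 1` at level `ℓ + 2`.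
-/

namespace Nat

theorem mul_add_lt_mul_add_iff {B a a' b b' : ℕ} (hb : b < B) (hb' : b' < B) :
    a * B + b < a' * B + b' ↔ a < a' ∨ a = a' ∧ b < b' := by
  have step {c c' : ℕ} (h : c < c') : c * B + B ≤ c' * B := by
    simpa [Nat.succ_mul] using Nat.mul_le_mul_right B (Nat.succ_le_of_lt h)
  constructor
  · intro h
    rcases lt_trichotomy a a' with h' | rfl | h'
    · exact Or.inl h'
    · exact Or.inr ⟨rfl, by omega⟩
    · have := step h'; omega
  · rintro (h | ⟨rfl, h⟩)
    · have := step h; omega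
    · omega

theorem mul_add_eq_mul_add_iff {B a a' b b' : ℕ} (hb : b < B) (hb' : b' < B) :
    a * B + b = a' * B + b' ↔ a = a' ∧ b = b' := by
  refine ⟨fun h => ?_, by rintro ⟨rfl, rfl⟩; rfl⟩
  have h1 := (mul_add_lt_mul_add_iff hb hb').not.mp h.not_lt
  have h2 := (mul_add_lt_mul_add_iff hb' hb).not.mp h.not_gt
  omega

end Nat

namespace DigitReversal

variable {k : ℕ}

theorem digitRev_lt (hk : 0 < k) : ∀ ℓ n, digitRev k ℓ n < k ^ ℓ
  | 0, _ => Nat.one_pos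
  | ℓ + 1, n => by
    have hd := digitRev_lt hk ℓ (n / k)
    have hm : n % k * k ^ ℓ + k ^ ℓ ≤ k * k ^ ℓ := by
      rw [← Nat.succ_mul]; exact Nat.mul_le_mul_right _ (Nat.mod_lt n hk)
    rw [digitRev, pow_succ']
    omega

@[simp]
theorem digitRev_zero : ∀ ℓ, digitRev k ℓ 0 = 0
  | 0 => rfl
  | ℓ + 1 => by simp [digitRev, digitRev_zero ℓ]

theorem digitRev_one {n : ℕ} (hn : n < k) : digitRev k 1 n = n := by
  simp [digitRev, Nat.mod_eq_of_lt hn]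

theorem digitRev_add_pow_mul (hk : 0 < k) (b m : ℕ) :
    ∀ a r, r < k ^ a → digitRev k (a + b) (r + k ^ a * m) = digitRev k a r * k ^ b + digitRev k b m
  | 0, r, hr => by simp_all
  | a + 1, r, hr => by
    have hr' : r / k < k ^ a := Nat.div_lt_of_lt_mul (by rwa [← pow_succ'])
    have hmod : (r + k ^ (a + 1) * m) % k = r % k := by
      rw [pow_succ', mul_assoc, Nat.add_mul_mod_self_left]
    have hdiv : (r + k ^ (a + 1) * m) / k = r / k + k ^ a * m := by
      rw [pow_succ', mul_assoc, Nat.add_mul_div_left _ _ hk]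
    rw [show a + 1 + b = (a + b) + 1 by omega, digitRev, digitRev, hmod, hdiv,
      digitRev_add_pow_mul hk b m a _ hr', pow_add]
    ring

theorem digitRev_digitRev (hk : 0 < k) : ∀ {ℓ n}, n < k ^ ℓ → digitRev k ℓ (digitRev k ℓ n) = n
  | 0, n, hn => by simp_all
  | ℓ + 1, n, hn => by
    have hn' : n / k < k ^ ℓ := Nat.div_lt_of_lt_mul (by rwa [← pow_succ'])
    have h := digitRev_add_pow_mul hk 1 (n % k) ℓ _ (digitRev_lt hk ℓ (n / k))
    rw [show digitRev k (ℓ + 1) n = digitRev k ℓ (n / k) + k ^ ℓ * (n % k) by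
      rw [digitRev]; ring, h, digitRev_digitRev hk hn', digitRev_one (Nat.mod_lt n hk),
      pow_one, Nat.div_add_mod']

theorem digitRev_pos (hk : 0 < k) {ℓ n : ℕ} (hn : n < k ^ ℓ) (hpos : 0 < n) :
    0 < digitRev k ℓ n := by
  refine Nat.pos_of_ne_zero fun h => hpos.ne' ?_
  rw [← digitRev_digitRev hk hn, h, digitRev_zero]

def frame (k ℓ x t y : ℕ) : ℕ := (x * k ^ ℓ + t) * k + y

section Frame

variable {ℓ x x' t t' y y' : ℕ}

theorem frame_lt_frame_iff (ht : t < k ^ ℓ) (ht' : t' < k ^ ℓ) (hy : y < k) (hy' : y' < k) :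
    frame k ℓ x t y < frame k ℓ x' t' y' ↔ x < x' ∨ x = x' ∧ (t < t' ∨ t = t' ∧ y < y') := by
  rw [frame, frame, Nat.mul_add_lt_mul_add_iff hy hy', Nat.mul_add_lt_mul_add_iff ht ht',
    Nat.mul_add_eq_mul_add_iff ht ht']
  tauto

theorem frame_inj (ht : t < k ^ ℓ) (ht' : t' < k ^ ℓ) (hy : y < k) (hy' : y' < k) :
    frame k ℓ x t y = frame k ℓ x' t' y' ↔ x = x' ∧ t = t' ∧ y = y' := by
  rw [frame, frame, Nat.mul_add_eq_mul_add_iff hy hy', Nat.mul_add_eq_mul_add_iff ht ht',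
    and_assoc]

theorem frame_lt_pow (hx : x < k) (ht : t < k ^ ℓ) (hy : y < k) :
    frame k ℓ x t y < k ^ (ℓ + 2) := by
  have hk : 0 < k := by omega
  calc frame k ℓ x t y < frame k ℓ k 0 0 :=
        (frame_lt_frame_iff ht (by positivity) hy hk).mpr (Or.inl hx)
    _ = k ^ (ℓ + 2) := by simp [frame]; ring

theorem exists_eq_frame (hk : 0 < k) {n : ℕ} (hn : n < k ^ (ℓ + 2)) :
    ∃ x t y, x < k ∧ t < k ^ ℓ ∧ y < k ∧ n = frame k ℓ x t y := by
  refine ⟨n / k / k ^ ℓ, n / k % k ^ ℓ, n % k, ?_, Nat.mod_lt _ (by positivity),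
    Nat.mod_lt _ hk, by rw [frame, Nat.div_add_mod', Nat.div_add_mod']⟩
  rw [Nat.div_div_eq_div_mul, Nat.div_lt_iff_lt_mul (by positivity)]
  calc n < k ^ (ℓ + 2) := hn
    _ = k * (k * k ^ ℓ) := by ring

theorem digitRev_frame (hk : 0 < k) (hx : x < k) (ht : t < k ^ ℓ) (hy : y < k) :
    digitRev k (ℓ + 2) (frame k ℓ x t y) = frame k ℓ y (digitRev k ℓ t) x := by
  have h := digitRev_add_pow_mul hk (ℓ + 1) (t + k ^ ℓ * x) 1 y (by simpa using hy)
  rw [digitRev_add_pow_mul hk 1 x ℓ t ht, digitRev_one hy, digitRev_one hx] at h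
  rw [frame, frame, show ℓ + 2 = 1 + (ℓ + 1) by omega,
    show (x * k ^ ℓ + t) * k + y = y + k ^ 1 * (t + k ^ ℓ * x) by ring, h]
  ring

end Frame

/-- The value at `ℓ = 0` is not the answer there (which is `1`); it gives `potential k 2` the
weight `1`. -/
def maxDecLength (k : ℕ) : ℕ → ℕ
  | 0 => 0
  | 1 => 1
  | 2 => k
  | ℓ + 3 => k * maxDecLength k (ℓ + 1) + (k - 1)

theorem maxDecLength_add_two {ℓ : ℕ} (hℓ : 1 ≤ ℓ) :
    maxDecLength k (ℓ + 2) = k * maxDecLength k ℓ + (k - 1) := by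
  obtain ⟨m, rfl⟩ := Nat.exists_eq_add_of_le' hℓ
  rfl

theorem maxDecLength_add_two_add_one (hk : 0 < k) {ℓ : ℕ} (hℓ : 1 ≤ ℓ) :
    maxDecLength k (ℓ + 2) + 1 = k * (maxDecLength k ℓ + 1) := by
  rw [maxDecLength_add_two hℓ, add_assoc, Nat.sub_add_cancel hk, mul_add_one]

theorem maxDecLength_of_odd (hk : 0 < k) {ℓ : ℕ} (hℓ : Odd ℓ) :
    maxDecLength k ℓ = 2 * k ^ ((ℓ - 1) / 2) - 1 := by
  obtain ⟨m, rfl⟩ := hℓ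
  suffices maxDecLength k (2 * m + 1) + 1 = 2 * k ^ m by
    rw [show (2 * m + 1 - 1) / 2 = m by omega]; omega
  induction m with
  | zero => rfl
  | succ m ih =>
    rw [show 2 * (m + 1) + 1 = 2 * m + 1 + 2 by ring, maxDecLength_add_two_add_one hk (by omega),
      ih, pow_succ]
    ring

theorem maxDecLength_of_even (hk : 0 < k) {ℓ : ℕ} (hℓ : Even ℓ) (hℓ0 : 1 ≤ ℓ) :
    maxDecLength k ℓ = (k + 1) * k ^ (ℓ / 2 - 1) - 1 := by
  obtain ⟨m, rfl⟩ := hℓ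
  obtain ⟨m, rfl⟩ := Nat.exists_eq_add_of_le' (show 1 ≤ m by omega)
  suffices maxDecLength k (2 * m + 2) + 1 = (k + 1) * k ^ m by
    rw [show (m + 1 + (m + 1)) / 2 - 1 = m by omega, show m + 1 + (m + 1) = 2 * m + 2 by ring]
    omega
  clear hℓ0
  induction m with
  | zero => simp [maxDecLength]
  | succ m ih =>
    rw [show 2 * (m + 1) + 2 = 2 * m + 2 + 2 by ring, maxDecLength_add_two_add_one hk (by omega),
      ih, pow_succ]
    ring

def potential (k : ℕ) : ℕ → ℕ → ℕ
  | 0, _ => 0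
  | 1, _ => 0
  | ℓ + 2, n =>
    (n / k / k ^ ℓ + (k - 1 - n % k)) * (maxDecLength k ℓ + 1) + potential k ℓ (n / k % k ^ ℓ)

theorem potential_frame {ℓ x t y : ℕ} (ht : t < k ^ ℓ) (hy : y < k) :
    potential k (ℓ + 2) (frame k ℓ x t y)
      = (x + (k - 1 - y)) * (maxDecLength k ℓ + 1) + potential k ℓ t := by
  obtain ⟨hdiv, hmod⟩ := (Nat.div_mod_unique (Nat.zero_lt_of_lt hy)).mpr
    ⟨show y + k * (x * k ^ ℓ + t) = frame k ℓ x t y by rw [frame]; ring, hy⟩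
  obtain ⟨hdiv', hmod'⟩ := (Nat.div_mod_unique (Nat.zero_lt_of_lt ht)).mpr
    ⟨show t + k ^ ℓ * x = x * k ^ ℓ + t by ring, ht⟩
  rw [potential, hdiv, hmod, hdiv', hmod']

structure IsInversionPotential (k ℓ D : ℕ) (Φ : ℕ → ℕ) : Prop where
  add_digitRev : ∀ n < k ^ ℓ, Φ n + Φ (digitRev k ℓ n) + 2 = 2 * D
  lt_add_of_lt : ∀ {n n'}, n < n' → n' < k ^ ℓ → Φ n < Φ n' + D
  add_two_le : ∀ {n n'}, n < n' → n' < k ^ ℓ → digitRev k ℓ n' < digitRev k ℓ n → Φ n + 2 ≤ Φ n'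

namespace IsInversionPotential

variable {ℓ D : ℕ} {Φ : ℕ → ℕ} {n n' : ℕ}

theorem add_two_le_two_mul (h : IsInversionPotential k ℓ D Φ) (hn : n < k ^ ℓ) :
    Φ n + 2 ≤ 2 * D := by
  have := h.add_digitRev n hn
  omega

theorem lt_add_of_digitRev_lt (h : IsInversionPotential k ℓ D Φ) (hk : 0 < k) (hn : n < k ^ ℓ)
    (hn' : n' < k ^ ℓ) (hrev : digitRev k ℓ n' < digitRev k ℓ n) : Φ n < Φ n' + D := by
  have := h.lt_add_of_lt hrev (digitRev_lt hk ℓ n)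
  have := h.add_digitRev n hn
  have := h.add_digitRev n' hn'
  omega

theorem le_of_hasDecSubseq (h : IsInversionPotential k ℓ D Φ) {d : ℕ}
    (hd : HasDecSubseq (k ^ ℓ) (fun p => digitRev k ℓ p) d) : d ≤ D := by
  obtain ⟨pos, hmono, hanti⟩ := hd
  refine Fin.le_of_injective (fun i => ⟨Φ (pos i) / 2, ?_⟩) (StrictMono.injective fun i j hij => ?_)
  · have := h.add_two_le_two_mul (pos i).isLt
    omega
  · have := h.add_two_le (hmono hij) (pos j).isLt (hanti hij)
    rw [Fin.mk_lt_mk]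
    omega

end IsInversionPotential

theorem isInversionPotential_one : IsInversionPotential k 1 1 (potential k 1) where
  add_digitRev _ _ := rfl
  lt_add_of_lt _ _ := Nat.one_pos
  add_two_le {n n'} hlt hn' hrev := by
    rw [pow_one] at hn'
    rw [digitRev_one hn', digitRev_one (hlt.trans hn')] at hrev
    omega

theorem isInversionPotential_two (hk : 0 < k) : IsInversionPotential k 2 k (potential k 2) := by
  have eq_frame {n : ℕ} (hn : n < k ^ 2) : ∃ x y, x < k ∧ y < k ∧ n = frame k 0 x 0 y := by
    obtain ⟨x, t, y, hx, ht, hy, rfl⟩ := exists_eq_frame (ℓ := 0) hk hn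
    obtain rfl : t = 0 := by simpa using ht
    exact ⟨x, y, hx, hy, rfl⟩
  have potential_eq {x y : ℕ} (hy : y < k) : potential k 2 (frame k 0 x 0 y) = x + (k - 1 - y) := by
    simpa [maxDecLength, potential] using potential_frame (x := x) (ℓ := 0) (by simp) hy
  have digitRev_eq {x y : ℕ} (hx : x < k) (hy : y < k) :
      digitRev k 2 (frame k 0 x 0 y) = frame k 0 y 0 x := by
    simpa [digitRev] using digitRev_frame (ℓ := 0) hk hx (by simp) hy
  have lt_iff {x x' y y' : ℕ} (hy : y < k) (hy' : y' < k) :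
      frame k 0 x 0 y < frame k 0 x' 0 y' ↔ x < x' ∨ x = x' ∧ y < y' := by
    simpa using
      frame_lt_frame_iff (ℓ := 0) (x := x) (x' := x') (t := 0) (t' := 0) (by simp) (by simp) hy hy'
  refine ⟨fun n hn => ?_, fun {n n'} hlt hn' => ?_, fun {n n'} hlt hn' hrev => ?_⟩
  · obtain ⟨x, y, hx, hy, rfl⟩ := eq_frame hn
    rw [digitRev_eq hx hy, potential_eq hy, potential_eq hx]
    omega
  · obtain ⟨x', y', hx', hy', rfl⟩ := eq_frame hn'
    obtain ⟨x, y, hx, hy, rfl⟩ := eq_frame (hlt.trans hn')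
    rw [potential_eq hy, potential_eq hy']
    rw [lt_iff hy hy'] at hlt
    omega
  · obtain ⟨x', y', hx', hy', rfl⟩ := eq_frame hn'
    obtain ⟨x, y, hx, hy, rfl⟩ := eq_frame (hlt.trans hn')
    rw [potential_eq hy, potential_eq hy']
    rw [lt_iff hy hy'] at hlt
    rw [digitRev_eq hx hy, digitRev_eq hx' hy', lt_iff hx' hx] at hrev
    omega

namespace IsInversionPotential

variable {ℓ : ℕ} {n n' : ℕ}

theorem add_digitRev_add_two (hk : 0 < k)
    (h : IsInversionPotential k ℓ (maxDecLength k ℓ) (potential k ℓ)) (hn : n < k ^ (ℓ + 2)) :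
    potential k (ℓ + 2) n + potential k (ℓ + 2) (digitRev k (ℓ + 2) n) + 2
      = 2 * (k * maxDecLength k ℓ + (k - 1)) := by
  obtain ⟨x, t, y, hx, ht, hy, rfl⟩ := exists_eq_frame hk hn
  have hk1 : k - 1 + 1 = k := Nat.sub_add_cancel hk
  have hA := h.add_digitRev t ht
  rw [digitRev_frame hk hx ht hy, potential_frame ht hy, potential_frame (digitRev_lt hk ℓ t) hx]
  have hz : x + (k - 1 - y) + (y + (k - 1 - x)) + 2 = 2 * k := by omega
  generalize x + (k - 1 - y) = z, y + (k - 1 - x) = z' at hz ⊢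
  have := congrArg (· * (maxDecLength k ℓ + 1)) hz
  linarith

theorem lt_add_of_lt_add_two (hk : 0 < k)
    (h : IsInversionPotential k ℓ (maxDecLength k ℓ) (potential k ℓ)) (hlt : n < n')
    (hn' : n' < k ^ (ℓ + 2)) :
    potential k (ℓ + 2) n < potential k (ℓ + 2) n' + (k * maxDecLength k ℓ + (k - 1)) := by
  obtain ⟨x', t', y', hx', ht', hy', rfl⟩ := exists_eq_frame hk hn'
  obtain ⟨x, t, y, hx, ht, hy, rfl⟩ := exists_eq_frame hk (hlt.trans hn')
  rw [frame_lt_frame_iff ht ht' hy hy'] at hlt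
  rw [potential_frame ht hy, potential_frame ht' hy']
  have hk1 : k - 1 + 1 = k := Nat.sub_add_cancel hk
  have hrange := h.add_two_le_two_mul ht
  rcases hlt with hx | ⟨rfl, ht | ⟨rfl, hy⟩⟩
  · have hz := Nat.mul_le_mul_right (maxDecLength k ℓ + 1)
      (show x + (k - 1 - y) + 2 ≤ x' + (k - 1 - y') + k by omega)
    linarith
  · have hz := Nat.mul_le_mul_right (maxDecLength k ℓ + 1)
      (show x + (k - 1 - y) + 1 ≤ x + (k - 1 - y') + k by omega)
    have := h.lt_add_of_lt ht ht'
    linarith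
  · have hz := Nat.mul_le_mul_right (maxDecLength k ℓ + 1)
      (show x + (k - 1 - y) + 1 ≤ x + (k - 1 - y') + k by omega)
    linarith

theorem add_two_le_add_two (hk : 0 < k)
    (h : IsInversionPotential k ℓ (maxDecLength k ℓ) (potential k ℓ)) (hlt : n < n')
    (hn' : n' < k ^ (ℓ + 2)) (hrev : digitRev k (ℓ + 2) n' < digitRev k (ℓ + 2) n) :
    potential k (ℓ + 2) n + 2 ≤ potential k (ℓ + 2) n' := by
  obtain ⟨x', t', y', hx', ht', hy', rfl⟩ := exists_eq_frame hk hn'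
  obtain ⟨x, t, y, hx, ht, hy, rfl⟩ := exists_eq_frame hk (hlt.trans hn')
  rw [frame_lt_frame_iff ht ht' hy hy'] at hlt
  rw [digitRev_frame hk hx ht hy, digitRev_frame hk hx' ht' hy',
    frame_lt_frame_iff (digitRev_lt hk ℓ t') (digitRev_lt hk ℓ t) hx' hx] at hrev
  rw [potential_frame ht hy, potential_frame ht' hy']
  rcases hlt with hx | ⟨rfl, ht | ⟨rfl, hy⟩⟩
  · rcases hrev with hy | ⟨rfl, hrt | ⟨-, hx⟩⟩
    · have hz := Nat.mul_le_mul_right (maxDecLength k ℓ + 1)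
        (show x + (k - 1 - y) + 2 ≤ x' + (k - 1 - y') by omega)
      have := h.add_two_le_two_mul ht
      linarith
    · have hz := Nat.mul_le_mul_right (maxDecLength k ℓ + 1)
        (show x + (k - 1 - y') + 1 ≤ x' + (k - 1 - y') by omega)
      have := h.lt_add_of_digitRev_lt hk ht ht' hrt
      linarith
    · omega
  · rcases hrev with hy | ⟨rfl, hrt | ⟨-, hx⟩⟩
    · have hz := Nat.mul_le_mul_right (maxDecLength k ℓ + 1)
        (show x + (k - 1 - y) + 1 ≤ x + (k - 1 - y') by omega)
      have := h.lt_add_of_lt ht ht'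
      linarith
    · have := h.add_two_le ht ht' hrt
      linarith
    · omega
  · omega

theorem add_two (hk : 0 < k) (hℓ : 1 ≤ ℓ)
    (h : IsInversionPotential k ℓ (maxDecLength k ℓ) (potential k ℓ)) :
    IsInversionPotential k (ℓ + 2) (maxDecLength k (ℓ + 2)) (potential k (ℓ + 2)) := by
  rw [maxDecLength_add_two hℓ]
  exact ⟨fun _ hn => h.add_digitRev_add_two hk hn, h.lt_add_of_lt_add_two hk,
    h.add_two_le_add_two hk⟩

end IsInversionPotential

theorem isInversionPotential (hk : 0 < k) {ℓ : ℕ} (hℓ : 1 ≤ ℓ) :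
    IsInversionPotential k ℓ (maxDecLength k ℓ) (potential k ℓ) := by
  induction ℓ using Nat.twoStepInduction with
  | zero => omega
  | one => exact isInversionPotential_one
  | more ℓ ih _ =>
    rcases Nat.eq_zero_or_pos ℓ with rfl | hℓ
    · exact isInversionPotential_two hk
    · exact (ih hℓ).add_two hk hℓ

theorem hasDecSubseq_card_of_strictAntiOn {M : ℕ} {f : ℕ → ℕ} {S : Finset ℕ}
    (hS : ∀ n ∈ S, n < M) (hf : StrictAntiOn f S) : HasDecSubseq M (fun p => f p) S.card :=
  ⟨fun i => ⟨S.orderEmbOfFin rfl i, hS _ (S.orderEmbOfFin_mem rfl i)⟩,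
    fun _ _ hij => (S.orderEmbOfFin rfl).strictMono hij,
    fun _ _ hij => hf (S.orderEmbOfFin_mem rfl _) (S.orderEmbOfFin_mem rfl _)
      ((S.orderEmbOfFin rfl).strictMono hij)⟩

def extendFamily (k ℓ : ℕ) (S : Finset ℕ) : Finset ℕ :=
  (S ×ˢ Finset.range k).image (fun p => frame k ℓ p.2 p.1 (k - 1 - p.2)) ∪
    (Finset.Ico 1 k).image fun x => frame k ℓ x 0 (k - x)

section ExtendFamily

variable {ℓ : ℕ} {S : Finset ℕ}

theorem mem_extendFamily {n : ℕ} :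
    n ∈ extendFamily k ℓ S ↔
      (∃ t ∈ S, ∃ x < k, frame k ℓ x t (k - 1 - x) = n) ∨
        ∃ x, 1 ≤ x ∧ x < k ∧ frame k ℓ x 0 (k - x) = n := by
  simp [extendFamily, and_assoc]

theorem card_extendFamily (hk : 0 < k) (hS : ∀ n ∈ S, 0 < n ∧ n < k ^ ℓ) :
    (extendFamily k ℓ S).card = k * S.card + (k - 1) := by
  have h0 : 0 < k ^ ℓ := by positivity
  have hdisj : Disjoint ((S ×ˢ Finset.range k).image fun p => frame k ℓ p.2 p.1 (k - 1 - p.2))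
      ((Finset.Ico 1 k).image fun x => frame k ℓ x 0 (k - x)) := by
    simp only [Finset.disjoint_left, Finset.mem_image, Finset.mem_product, Finset.mem_range,
      Finset.mem_Ico, Prod.exists, not_exists, not_and]
    rintro _ ⟨t, x, ⟨ht, hx⟩, rfl⟩ x' hx' heq
    have := (frame_inj h0 (hS t ht).2 (by omega) (by omega)).mp heq
    have := (hS t ht).1
    omega
  rw [extendFamily, Finset.card_union_of_disjoint hdisj, Finset.card_image_of_injOn,
    Finset.card_image_of_injOn, Finset.card_product, Finset.card_range, Nat.card_Ico, mul_comm]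
  · intro x hx x' hx' heq
    simp only [Finset.coe_Ico, Set.mem_Ico] at hx hx'
    exact ((frame_inj h0 h0 (by omega) (by omega)).mp heq).1
  · rintro ⟨t, x⟩ hp ⟨t', x'⟩ hp' heq
    simp only [Finset.coe_product, Set.mem_prod, Finset.mem_coe, Finset.coe_range,
      Set.mem_Iio] at hp hp'
    have := (frame_inj (hS t hp.1).2 (hS t' hp'.1).2 (by omega) (by omega)).mp heq
    simp only [Prod.mk.injEq]
    omega

theorem pos_and_lt_of_mem_extendFamily (hk : 0 < k) (hS : ∀ n ∈ S, 0 < n ∧ n < k ^ ℓ) {n : ℕ}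
    (hn : n ∈ extendFamily k ℓ S) : 0 < n ∧ n < k ^ (ℓ + 2) := by
  rcases mem_extendFamily.mp hn with ⟨t, ht, x, hx, rfl⟩ | ⟨x, hx1, hx, rfl⟩
  · obtain ⟨htpos, htlt⟩ := hS t ht
    have := Nat.mul_pos (Nat.add_pos_right (x * k ^ ℓ) htpos) hk
    exact ⟨by unfold frame; omega, frame_lt_pow hx htlt (by omega)⟩
  · exact ⟨by unfold frame; omega, frame_lt_pow hx (by positivity) (by omega)⟩

theorem strictAntiOn_extendFamily (hk : 0 < k) (hS : ∀ n ∈ S, 0 < n ∧ n < k ^ ℓ)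
    (hanti : StrictAntiOn (digitRev k ℓ) S) :
    StrictAntiOn (digitRev k (ℓ + 2)) (extendFamily k ℓ S) := by
  have h0 : 0 < k ^ ℓ := by positivity
  have hrev0 : digitRev k ℓ 0 < k ^ ℓ := digitRev_lt hk ℓ 0
  intro a ha b hb hab
  rcases mem_extendFamily.mp ha with ⟨t, ht, x, hx, rfl⟩ | ⟨x, hx1, hx, rfl⟩ <;>
    rcases mem_extendFamily.mp hb with ⟨t', ht', x', hx', rfl⟩ | ⟨x', hx1', hx', rfl⟩
  · have := hanti ht ht'
    rw [frame_lt_frame_iff (hS t ht).2 (hS t' ht').2 (by omega) (by omega)] at hab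
    rw [digitRev_frame hk hx (hS t ht).2 (by omega), digitRev_frame hk hx' (hS t' ht').2 (by omega),
      frame_lt_frame_iff (digitRev_lt hk ℓ t') (digitRev_lt hk ℓ t) hx' hx]
    omega
  · have := (hS t ht).1
    have := digitRev_pos hk (hS t ht).2 (hS t ht).1
    rw [frame_lt_frame_iff (hS t ht).2 h0 (by omega) (by omega)] at hab
    rw [digitRev_frame hk hx (hS t ht).2 (by omega), digitRev_frame hk hx' h0 (by omega),
      frame_lt_frame_iff hrev0 (digitRev_lt hk ℓ t) hx' hx, digitRev_zero]
    omega
  · rw [frame_lt_frame_iff h0 (hS t' ht').2 (by omega) (by omega)] at hab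
    rw [digitRev_frame hk hx h0 (by omega), digitRev_frame hk hx' (hS t' ht').2 (by omega),
      frame_lt_frame_iff (digitRev_lt hk ℓ t') hrev0 hx' hx]
    omega
  · rw [frame_lt_frame_iff h0 h0 (by omega) (by omega)] at hab
    rw [digitRev_frame hk hx h0 (by omega), digitRev_frame hk hx' h0 (by omega),
      frame_lt_frame_iff hrev0 hrev0 hx' hx]
    omega

end ExtendFamily

theorem exists_strictAntiOn_two (hk : 2 ≤ k) :
    ∃ S : Finset ℕ, S.card = k ∧ (∀ n ∈ S, 0 < n ∧ n < k ^ 2) ∧ StrictAntiOn (digitRev k 2) S := by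
  have hk0 : 0 < k := by omega
  have h0 : 0 < k ^ 0 := by simp
  refine ⟨(Finset.range k).image fun x => frame k 0 x 0 (k - 1 - x), ?_, ?_, ?_⟩
  · rw [Finset.card_image_of_injOn, Finset.card_range]
    intro x hx x' hx' heq
    simp only [Finset.coe_range, Set.mem_Iio] at hx hx'
    exact ((frame_inj h0 h0 (by omega) (by omega)).mp heq).1
  · simp only [Finset.mem_image, Finset.mem_range]
    rintro _ ⟨x, hx, rfl⟩
    have := Nat.le_mul_of_pos_right x hk0
    exact ⟨by simp only [frame, pow_zero, mul_one, add_zero]; omega, frame_lt_pow hx h0 (by omega)⟩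
  · simp only [Finset.coe_image, Finset.coe_range, StrictAntiOn, Set.mem_image, Set.mem_Iio]
    rintro _ ⟨x, hx, rfl⟩ _ ⟨x', hx', rfl⟩ hab
    rw [frame_lt_frame_iff h0 h0 (by omega) (by omega)] at hab
    rw [digitRev_frame hk0 hx h0 (by omega), digitRev_frame hk0 hx' h0 (by omega),
      frame_lt_frame_iff (digitRev_lt hk0 0 0) (digitRev_lt hk0 0 0) hx' hx]
    omega

theorem exists_strictAntiOn (hk : 2 ≤ k) {ℓ : ℕ} (hℓ : 1 ≤ ℓ) :
    ∃ S : Finset ℕ, S.card = maxDecLength k ℓ ∧ (∀ n ∈ S, 0 < n ∧ n < k ^ ℓ) ∧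
      StrictAntiOn (digitRev k ℓ) S := by
  induction ℓ using Nat.twoStepInduction with
  | zero => omega
  | one => exact ⟨{1}, rfl, by simp; omega, by simp⟩
  | more ℓ ih _ =>
    rcases Nat.eq_zero_or_pos ℓ with rfl | hℓ
    · exact exists_strictAntiOn_two hk
    · obtain ⟨S, hcard, hS, hanti⟩ := ih hℓ
      have hk0 : 0 < k := by omega
      exact ⟨extendFamily k ℓ S, by rw [card_extendFamily hk0 hS, hcard, maxDecLength_add_two hℓ],
        fun _ => pos_and_lt_of_mem_extendFamily hk0 hS, strictAntiOn_extendFamily hk0 hS hanti⟩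

theorem hasDecSubseq_maxDecLength (hk : 2 ≤ k) {ℓ : ℕ} (hℓ : 1 ≤ ℓ) :
    HasDecSubseq (k ^ ℓ) (fun p => digitRev k ℓ p) (maxDecLength k ℓ) := by
  obtain ⟨S, hcard, hS, hanti⟩ := exists_strictAntiOn hk hℓ
  exact hcard ▸ hasDecSubseq_card_of_strictAntiOn (fun n hn => (hS n hn).2) hanti

end DigitReversal

/-- The length of the longest strictly decreasing subsequence of the digit-reversal
permutation `R_k(ℓ)` equals `(k+1)·k^(ℓ/2-1) - 1` if `ℓ` is even and `2·k^((ℓ-1)/2) - 1`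
if `ℓ` is odd. -/
theorem stmt11 (k ℓ : ℕ) (hk : 2 ≤ k) (hℓ : 1 ≤ ℓ) :
    (Even ℓ →
      HasDecSubseq (k ^ ℓ) (fun p => digitRev k ℓ (p : ℕ)) ((k + 1) * k ^ (ℓ / 2 - 1) - 1) ∧
      ∀ d, HasDecSubseq (k ^ ℓ) (fun p => digitRev k ℓ (p : ℕ)) d →
        d ≤ (k + 1) * k ^ (ℓ / 2 - 1) - 1) ∧
    (Odd ℓ →
      HasDecSubseq (k ^ ℓ) (fun p => digitRev k ℓ (p : ℕ)) (2 * k ^ ((ℓ - 1) / 2) - 1) ∧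
      ∀ d, HasDecSubseq (k ^ ℓ) (fun p => digitRev k ℓ (p : ℕ)) d →
        d ≤ 2 * k ^ ((ℓ - 1) / 2) - 1) := by
  have hk0 : 0 < k := by omega
  have h (D : ℕ) (hD : DigitReversal.maxDecLength k ℓ = D) :
      HasDecSubseq (k ^ ℓ) (fun p => digitRev k ℓ (p : ℕ)) D ∧
        ∀ d, HasDecSubseq (k ^ ℓ) (fun p => digitRev k ℓ (p : ℕ)) d → d ≤ D :=
    hD ▸ ⟨DigitReversal.hasDecSubseq_maxDecLength hk hℓ,
      fun _ hd => (DigitReversal.isInversionPotential hk0 hℓ).le_of_hasDecSubseq hd⟩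
  exact ⟨fun he => h _ (DigitReversal.maxDecLength_of_even hk0 he hℓ),
    fun ho => h _ (DigitReversal.maxDecLength_of_odd hk0 ho)⟩
end

section
/- For all integers 1 ≤ n ≤ ℓ, D_k(ℓ) ≤ D_k(n) · k^{ℓ−n}, where D_k(ℓ) denotes the maximum, over all permutations attainable from k^ℓ chips, of the length of the longest strictly decreasing subsequence. -/
/-- A firing step for `N` labeled chips on the infinite directed `k`-ary tree with
vertex set `{1, 2, 3, …}`, root `1`, where the `j`-th child (`1 ≤ j ≤ k`) of vertex `v`
is `k*(v-1)+j+1`.  A configuration assigns to each chip (element of `Fin N`,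
representing labels `1,…,N`) a vertex.  A step picks `k` chips `t 0 < t 1 < ⋯ < t (k-1)`
all on a common vertex `v` and sends the `j`-th smallest to the `j`-th child. -/
def FireStep (k N : ℕ) (c c' : Fin N → ℕ) : Prop :=
  ∃ (v : ℕ) (t : Fin k → Fin N),
    StrictMono t ∧
    (∀ j, c (t j) = v) ∧
    (∀ j : Fin k, c' (t j) = k * (v - 1) + (j : ℕ) + 2) ∧
    (∀ i : Fin N, (∀ j, i ≠ t j) → c' i = c i)

/-- Reachable from the initial configuration of `k^ℓ` chips all on the root. -/
def Reachable (k ℓ : ℕ) (c : Fin (k ^ ℓ) → ℕ) : Prop :=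
  Relation.ReflTransGen (FireStep k (k ^ ℓ)) (fun _ => 1) c

/-- A configuration is stable if every vertex holds fewer than `k` chips. -/
def Stable (k N : ℕ) (c : Fin N → ℕ) : Prop :=
  ∀ v : ℕ, (Finset.univ.filter (fun i => c i = v)).card < k

/-- `layerStart k m` is the leftmost (smallest-numbered) vertex on layer `m+1`;
the vertices of layer `m+1` read left to right are `layerStart k m + p` for `0 ≤ p < k^m`. -/
def layerStart (k : ℕ) : ℕ → ℕ
  | 0 => 1
  | m + 1 => k * (layerStart k m - 1) + 2

/-- `σ` is the permutation associated to some reachable stable configuration of `k^ℓ`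
chips: `σ p` (0-based, representing label `σ p + 1`) is the chip on the `p`-th leftmost
vertex of layer `ℓ+1`. -/
def Attainable (k ℓ : ℕ) (σ : Equiv.Perm (Fin (k ^ ℓ))) : Prop :=
  ∃ c : Fin (k ^ ℓ) → ℕ, Reachable k ℓ c ∧ Stable k (k ^ ℓ) c ∧
    ∀ p : Fin (k ^ ℓ), c (σ p) = layerStart k ℓ + (p : ℕ)

/-- `Dmax k ℓ` : the maximum, over all permutations attainable from `k^ℓ` chips, of the
length of the longest strictly decreasing subsequence. -/
noncomputable def Dmax (k ℓ : ℕ) : ℕ :=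
  sSup {d | ∃ σ : Equiv.Perm (Fin (k ^ ℓ)), Attainable k ℓ σ ∧
    HasDecSubseq (k ^ ℓ) (fun p => (σ p : ℕ)) d}

namespace Stmt13Aux

lemma layerStart_pos (k m : ℕ) : 1 ≤ layerStart k m := by
  cases m <;> simp [layerStart]

lemma layerStart_succ (k m : ℕ) : layerStart k (m+1) = layerStart k m + k^m := by
  induction m with
  | zero => simp [layerStart]
  | succ m ih =>
    have h1 := layerStart_pos k m
    have e1 : layerStart k (m+2) = k * (layerStart k (m+1) - 1) + 2 := rfl
    have e2 : layerStart k (m+1) = k * (layerStart k m - 1) + 2 := rfl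
    rw [e1, ih]
    have h2 : layerStart k m + k ^ m - 1 = (layerStart k m - 1) + k^m := by omega
    rw [h2, Nat.mul_add]
    have hp : k^(m+1) = k * k^m := by rw [pow_succ]; ring
    omega

lemma layerStart_le (k : ℕ) {m1 m2 : ℕ} (h : m1 ≤ m2) :
    layerStart k m1 ≤ layerStart k m2 := by
  induction m2 with
  | zero =>
    have : m1 = 0 := by omega
    subst this; rfl
  | succ m2 ih =>
    rcases Nat.lt_or_ge m1 (m2+1) with hc | hc
    · have := ih (by omega)
      rw [layerStart_succ]
      have := Nat.one_le_two_pow (n := m2)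
      omega
    · have : m1 = m2 + 1 := by omega
      subst this; rfl

lemma vtx_lt (k : ℕ) (hk : 1 ≤ k) {m1 x1 m2 : ℕ} (hx : x1 < k^m1) (h : m1 < m2) :
    layerStart k m1 + x1 < layerStart k m2 := by
  have h1 : layerStart k m1 + x1 < layerStart k (m1+1) := by
    rw [layerStart_succ]; omega
  exact lt_of_lt_of_le h1 (layerStart_le k h)

lemma vtx_inj (k : ℕ) (hk : 1 ≤ k) {m1 x1 m2 x2 : ℕ} (h1 : x1 < k^m1) (h2 : x2 < k^m2)
    (h : layerStart k m1 + x1 = layerStart k m2 + x2) : m1 = m2 ∧ x1 = x2 := by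
  rcases lt_trichotomy m1 m2 with hc | hc | hc
  · have := vtx_lt k hk h1 hc
    have := layerStart_pos k m2
    omega
  · subst hc; omega
  · have := vtx_lt k hk h2 hc
    have := layerStart_pos k m1
    omega

lemma child_eq (k m x j : ℕ) :
    k * (layerStart k m + x - 1) + j + 2 = layerStart k (m+1) + (k*x + j) := by
  have h1 := layerStart_pos k m
  have h : layerStart k m + x - 1 = (layerStart k m - 1) + x := by omega
  have e2 : layerStart k (m+1) = k * (layerStart k m - 1) + 2 := rfl
  rw [h, Nat.mul_add, e2]
  ring

lemma offset_lt (k : ℕ) {m a b y : ℕ} (hb : b < k^m) (hy : y < k^a) :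
    b * k^a + y < k^(m+a) := by
  calc b * k^a + y < b * k^a + k^a := by omega
    _ = (b+1) * k^a := by ring
    _ ≤ k^m * k^a := Nat.mul_le_mul_right _ (by omega)
    _ = k^(m+a) := (pow_add k m a).symm

def Sub (k m b v : ℕ) : Prop := ∃ a y, y < k^a ∧ v = layerStart k (m+a) + (b * k^a + y)

def Corr (k m b v w : ℕ) : Prop :=
  (∀ a y, y < k^a → v = layerStart k (m+a) + (b*k^a + y) → w = layerStart k a + y) ∧
  (¬ Sub k m b v → w = 1)

lemma corr_one (k m b : ℕ) (hk : 1 ≤ k) : Corr k m b 1 1 := by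
  constructor
  · intro a y hy h
    rcases Nat.eq_zero_or_pos (m + a) with h0 | h0
    · have hm : m = 0 := by omega
      have ha : a = 0 := by omega
      subst hm; subst ha
      simp [layerStart] at h ⊢
      omega
    · obtain ⟨s, hs⟩ := Nat.exists_eq_add_of_lt h0
      have : layerStart k (m+a) = layerStart k s + k^s := by
        rw [show m + a = s + 1 by omega, layerStart_succ]
      have := layerStart_pos k s
      have : 1 ≤ k^s := Nat.one_le_pow _ _ (by omega)
      omega
  · intro; rfl

end Stmt13Aux

namespace Stmt13Aux

lemma child_offset_lt (k a y j : ℕ) (hy : y < k^a) (hj : j < k) : k*y + j < k^(a+1) := by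
  calc k*y + j < k*y + k := by omega
    _ = k*(y+1) := by ring
    _ ≤ k*k^a := Nat.mul_le_mul_left _ (by omega)
    _ = k^(a+1) := by rw [pow_succ]; ring

lemma sub_child (k m b v j : ℕ) (hj : j < k) (hv : Sub k m b v) :
    Sub k m b (k*(v-1)+j+2) := by
  obtain ⟨a, y, hy, rfl⟩ := hv
  refine ⟨a+1, k*y+j, child_offset_lt k a y j hy hj, ?_⟩
  rw [child_eq]
  have h1 : k*(b*k^a+y)+j = b*k^(a+1)+(k*y+j) := by rw [pow_succ]; ring
  have h2 : layerStart k (m+(a+1)) = layerStart k (m+a+1) := rfl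
  omega

lemma step_pos {k N : ℕ} {c c' : Fin N → ℕ} (h : FireStep k N c c') (hp : ∀ i, 1 ≤ c i) :
    ∀ i, 1 ≤ c' i := by
  obtain ⟨v, t, hm, hat, hnew, hrest⟩ := h
  intro i
  by_cases hi : ∃ j, i = t j
  · obtain ⟨j, rfl⟩ := hi; rw [hnew j]; omega
  · push_neg at hi; rw [hrest i hi]; exact hp i

lemma chain_pos {k N : ℕ} {c : Fin N → ℕ}
    (h : Relation.ReflTransGen (FireStep k N) (fun _ => 1) c) : ∀ i, 1 ≤ c i := by
  induction h with
  | refl => intro _; exact le_refl 1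
  | tail _ hstep ih => exact step_pos hstep ih

lemma sub_step {k N m b : ℕ} {c c' : Fin N → ℕ} (h : FireStep k N c c') (i : Fin N)
    (hs : Sub k m b (c i)) : Sub k m b (c' i) := by
  obtain ⟨v, t, hmo, hat, hnew, hrest⟩ := h
  by_cases hi : ∃ j, i = t j
  · obtain ⟨j, rfl⟩ := hi
    rw [hnew j]
    rw [hat j] at hs
    exact sub_child k m b v j j.2 hs
  · push_neg at hi; rw [hrest i hi]; exact hs

lemma sub_chain {k N m b : ℕ} {c c' : Fin N → ℕ}
    (h : Relation.ReflTransGen (FireStep k N) c c') (i : Fin N)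
    (hs : Sub k m b (c i)) : Sub k m b (c' i) := by
  induction h with
  | refl => exact hs
  | tail _ hstep ih => exact sub_step hstep i ih

lemma final_mem (k n ℓ m b : ℕ) (hk : 2 ≤ k) (hmn : n + m = ℓ) (hb : b < k^m)
    (σ : Equiv.Perm (Fin (k^ℓ))) (cfin : Fin (k^ℓ) → ℕ)
    (hperm : ∀ p, cfin (σ p) = layerStart k ℓ + p)
    (S : Finset (Fin (k^ℓ)))
    (hS : ∀ i : Fin (k^ℓ), i ∈ S ↔ ∃ q : Fin (k^n), (σ.symm i : ℕ) = b * k^n + q)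
    (i : Fin (k^ℓ)) (hsub : Sub k m b (cfin i)) : i ∈ S := by
  obtain ⟨a, y, hy, hfe⟩ := hsub
  have h2 : cfin i = layerStart k ℓ + (σ.symm i : ℕ) := by
    have := hperm (σ.symm i)
    rwa [Equiv.apply_symm_apply] at this
  rw [h2] at hfe
  have hinj := vtx_inj k (by omega) (σ.symm i).is_lt (offset_lt k hb hy) hfe
  have ha : a = n := by omega
  subst ha
  exact (hS i).2 ⟨⟨y, hy⟩, hinj.2⟩

end Stmt13Aux

namespace Stmt13Aux

lemma sim (k n ℓ m b : ℕ) (hk : 2 ≤ k) (hmn : n + m = ℓ) (hb : b < k^m)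
    (σ : Equiv.Perm (Fin (k^ℓ))) (cfin : Fin (k^ℓ) → ℕ)
    (hperm : ∀ p, cfin (σ p) = layerStart k ℓ + p)
    (S : Finset (Fin (k^ℓ)))
    (hS : ∀ i : Fin (k^ℓ), i ∈ S ↔ ∃ q : Fin (k^n), (σ.symm i : ℕ) = b * k^n + q)
    (e : Fin (k^n) ≃o {x : Fin (k^ℓ) // x ∈ S}) :
    ∀ c : Fin (k^ℓ) → ℕ,
      Relation.ReflTransGen (FireStep k (k^ℓ)) (fun _ => 1) c →
      Relation.ReflTransGen (FireStep k (k^ℓ)) c cfin →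
      ∃ d : Fin (k^n) → ℕ,
        Relation.ReflTransGen (FireStep k (k^n)) (fun _ => 1) d ∧
        ∀ j, Corr k m b (c ((e j : {x : Fin (k^ℓ) // x ∈ S}) : Fin (k^ℓ))) (d j) := by
  intro c hchain
  induction hchain with
  | refl =>
    intro _
    exact ⟨fun _ => 1, Relation.ReflTransGen.refl, fun _ => corr_one k m b (by omega)⟩
  | @tail cm c' hab hstep ih =>
    intro hsuf
    obtain ⟨d, hd, hcorr⟩ := ih (Relation.ReflTransGen.head hstep hsuf)
    have hpos : ∀ i, 1 ≤ cm i := chain_pos hab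
    obtain ⟨v, t, htm, hat, hnew, hrest⟩ := hstep
    by_cases hv : Sub k m b v
    · -- firing inside the subtree
      obtain ⟨a, y, hy, hveq⟩ := hv
      have hsubnew : ∀ j : Fin k, Sub k m b (c' (t j)) := by
        intro j
        rw [hnew j]
        exact sub_child k m b v j j.2 ⟨a, y, hy, hveq⟩
      have hmemS : ∀ j, t j ∈ S :=
        fun j => final_mem k n ℓ m b hk hmn hb σ cfin hperm S hS (t j)
          (sub_chain hsuf (t j) (hsubnew j))
      set t' : Fin k → Fin (k^n) := fun j => e.symm ⟨t j, hmemS j⟩ with ht'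
      have ht'e : ∀ j, ((e (t' j) : {x : Fin (k^ℓ) // x ∈ S}) : Fin (k^ℓ)) = t j := by
        intro j; rw [ht']; simp
      have ht'mono : StrictMono t' := by
        intro j1 j2 hlt
        have h1 : (⟨t j1, hmemS j1⟩ : {x : Fin (k^ℓ) // x ∈ S}) < ⟨t j2, hmemS j2⟩ :=
          Subtype.mk_lt_mk.2 (htm hlt)
        exact e.symm.strictMono h1
      have ht'inj : Function.Injective t' := ht'mono.injective
      set w := layerStart k a + y with hw
      have hdw : ∀ j, d (t' j) = w := by
        intro j
        refine (hcorr (t' j)).1 a y hy ?_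
        rw [ht'e j, hat j]
        exact hveq
      classical
      set d' : Fin (k^n) → ℕ :=
        fun i => if h : ∃ j, t' j = i then k * (w - 1) + ((Classical.choose h : Fin k) : ℕ) + 2
          else d i with hd'
      have hd'fire : ∀ j : Fin k, d' (t' j) = k * (w-1) + (j:ℕ) + 2 := by
        intro j
        have hex : ∃ j', t' j' = t' j := ⟨j, rfl⟩
        rw [hd']
        simp only
        rw [dif_pos hex]
        have hcs := Classical.choose_spec hex
        rw [ht'inj hcs]
      have hd'rest : ∀ i, (∀ j, i ≠ t' j) → d' i = d i := by
        intro i hi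
        rw [hd']
        simp only
        rw [dif_neg]
        rintro ⟨j, hj⟩
        exact hi j hj.symm
      have hfire : FireStep k (k^n) d d' := ⟨w, t', ht'mono, hdw, hd'fire, hd'rest⟩
      refine ⟨d', hd.tail hfire, ?_⟩
      intro i
      by_cases hi : ∃ j, t' j = i
      · obtain ⟨j, rfl⟩ := hi
        have hceq : c' ((e (t' j) : {x : Fin (k^ℓ) // x ∈ S}) : Fin (k^ℓ)) =
            layerStart k (m+(a+1)) + (b*k^(a+1) + (k*y+(j:ℕ))) := by
          rw [ht'e j, hnew j, hveq, child_eq]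
          have h5 : k*(b*k^a+y)+(j:ℕ) = b*k^(a+1)+(k*y+(j:ℕ)) := by rw [pow_succ]; ring
          have h6 : layerStart k (m+(a+1)) = layerStart k (m+a+1) := rfl
          omega
        constructor
        · intro a' y' hy' heq
          rw [hceq] at heq
          have hco : k*y + (j:ℕ) < k^(a+1) := child_offset_lt k a y j hy j.2
          have hinj := vtx_inj k (by omega) (offset_lt k hb hco) (offset_lt k hb hy') heq
          have ha' : a' = a + 1 := by omega
          subst ha'
          have hy'' : y' = k*y + (j:ℕ) := by omega
          subst hy''
          rw [hd'fire j, hw]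
          exact child_eq k a y (j:ℕ)
        · intro hns
          exact absurd ⟨a+1, k*y+(j:ℕ), child_offset_lt k a y j hy j.2, hceq⟩ hns
      · push_neg at hi
        have hne : ∀ j, ((e i : {x : Fin (k^ℓ) // x ∈ S}) : Fin (k^ℓ)) ≠ t j := by
          intro j hcontra
          have h1 : e i = ⟨t j, hmemS j⟩ := Subtype.ext hcontra
          have h2 : t' j = i := by
            rw [ht']
            simp only
            rw [← h1]
            simp
          exact hi j h2
        rw [hrest _ hne, hd'rest i (fun j hj => hi j hj.symm)]
        exact hcorr i
    · -- firing outside the subtree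
      refine ⟨d, hd, ?_⟩
      intro i
      by_cases hi : ∃ j, ((e i : {x : Fin (k^ℓ) // x ∈ S}) : Fin (k^ℓ)) = t j
      · obtain ⟨j, hj⟩ := hi
        have hold : cm ((e i : {x : Fin (k^ℓ) // x ∈ S}) : Fin (k^ℓ)) = v := by
          rw [hj]; exact hat j
        have hd1 : d i = 1 := (hcorr i).2 (by rw [hold]; exact hv)
        have hcnew : c' ((e i : {x : Fin (k^ℓ) // x ∈ S}) : Fin (k^ℓ)) = k*(v-1)+(j:ℕ)+2 := by
          rw [hj]; exact hnew j
        rw [hcnew, hd1]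
        constructor
        · intro a y hy heq
          cases a with
          | zero =>
            have hy0 : y = 0 := by simpa using hy
            simp [layerStart, hy0]
          | succ a'' =>
            exfalso
            apply hv
            have hk0 : 0 < k := by omega
            obtain ⟨y1, r, h5, hrk0, hy1⟩ : ∃ y1 r, k * y1 + r = y ∧ r < k ∧ y1 < k^a'' :=
              ⟨y/k, y%k, Nat.div_add_mod y k, Nat.mod_lt y hk0, by
                rw [Nat.div_lt_iff_lt_mul hk0]
                calc y < k^(a''+1) := hy
                  _ = k^a'' * k := by rw [pow_succ]⟩
            have hde : b*k^(a''+1) + y = k*(b*k^a'' + y1) + r := by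
              rw [← h5, pow_succ]; ring
            have hch := child_eq k (m+a'') (b*k^a''+y1) r
            have heq2 : layerStart k (m+(a''+1)) + (b*k^(a''+1)+y) =
                k*(layerStart k (m+a'') + (b*k^a''+y1) - 1) + r + 2 := by
              rw [hde]
              exact hch.symm
            have hvpos : 1 ≤ v := by
              have := hpos (t j)
              rwa [hat j] at this
            have hVpos : 1 ≤ layerStart k (m+a'') + (b*k^a''+y1) := by
              have := layerStart_pos k (m+a'')
              omega
            have hjk : (j:ℕ) < k := j.2
            have hrk : r < k := hrk0
            have h6 : k*(v-1)+(j:ℕ) = k*(layerStart k (m+a'') + (b*k^a''+y1) - 1)+r := by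
              have hbridge : layerStart k (m+(a''+1)) = layerStart k (m+a''+1) := rfl
              have h8 := heq.trans heq2
              omega
            have h7 : v - 1 = layerStart k (m+a'') + (b*k^a''+y1) - 1 := by
              have := congrArg (fun z => z / k) h6
              simpa [Nat.mul_add_div hk0, Nat.div_eq_of_lt hjk, Nat.div_eq_of_lt hrk]
                using this
            exact ⟨a'', y1, hy1, by omega⟩
        · intro _; rfl
      · push_neg at hi
        rw [hrest _ hi]
        exact hcorr i

end Stmt13Aux

namespace Stmt13Aux

lemma key (k n ℓ m b : ℕ) (hk : 2 ≤ k) (hmn : n + m = ℓ) (hb : b < k^m)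
    (σ : Equiv.Perm (Fin (k^ℓ))) (c : Fin (k^ℓ) → ℕ)
    (hreach : Relation.ReflTransGen (FireStep k (k^ℓ)) (fun _ => 1) c)
    (hperm : ∀ p, c (σ p) = layerStart k ℓ + p)
    (emb : Fin (k^n) → Fin (k^ℓ))
    (hemb : ∀ q, (emb q : ℕ) = b * k^n + q) :
    ∃ τ : Equiv.Perm (Fin (k^n)),
      (∃ d : Fin (k^n) → ℕ, Relation.ReflTransGen (FireStep k (k^n)) (fun _ => 1) d ∧
        (∀ v : ℕ, (Finset.univ.filter (fun i => d i = v)).card < k) ∧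
        ∀ p : Fin (k^n), d (τ p) = layerStart k n + (p : ℕ)) ∧
      ∀ q1 q2 : Fin (k^n), (σ (emb q1) : ℕ) < σ (emb q2) → (τ q1 : ℕ) < τ q2 := by
  classical
  have hembinj : Function.Injective emb := by
    intro q1 q2 h
    have h2 := congrArg (fun z : Fin (k^ℓ) => (z : ℕ)) h
    simp only [hemb] at h2
    exact Fin.ext (by omega)
  set S : Finset (Fin (k^ℓ)) := Finset.image (fun q => σ (emb q)) Finset.univ with hSdef
  have hScard : S.card = k^n := by
    have hinj2 : Function.Injective (fun q : Fin (k^n) => σ (emb q)) :=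
      fun a b2 h => hembinj (σ.injective h)
    rw [hSdef, Finset.card_image_of_injective _ hinj2, Finset.card_univ, Fintype.card_fin]
  have hS : ∀ i, i ∈ S ↔ ∃ q : Fin (k^n), (σ.symm i : ℕ) = b*k^n + q := by
    intro i
    rw [hSdef]
    simp only [Finset.mem_image, Finset.mem_univ, true_and]
    constructor
    · rintro ⟨q, rfl⟩
      exact ⟨q, by rw [Equiv.symm_apply_apply, hemb]⟩
    · rintro ⟨q, hq⟩
      refine ⟨q, ?_⟩
      have h3 : σ.symm i = emb q := Fin.ext (by rw [hq, hemb])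
      rw [← h3, Equiv.apply_symm_apply]
  set e := S.orderIsoOfFin hScard with hedef
  have hmem : ∀ q, σ (emb q) ∈ S := by
    intro q
    rw [hSdef]
    exact Finset.mem_image_of_mem _ (Finset.mem_univ q)
  set τ0 : Fin (k^n) → Fin (k^n) := fun q => e.symm ⟨σ (emb q), hmem q⟩ with hτ0
  have hτ0inj : Function.Injective τ0 := by
    intro q1 q2 h
    rw [hτ0] at h
    simp only at h
    have h2 := congrArg e h
    simp only [OrderIso.apply_symm_apply] at h2
    exact hembinj (σ.injective (Subtype.ext_iff.1 h2))
  have hbij := Finite.injective_iff_bijective.mp hτ0inj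
  refine ⟨Equiv.ofBijective τ0 hbij, ?_, ?_⟩
  · obtain ⟨d, hd, hcorr⟩ := sim k n ℓ m b hk hmn hb σ c hperm S hS e c hreach
      Relation.ReflTransGen.refl
    have hdτ : ∀ q : Fin (k^n), d (τ0 q) = layerStart k n + q := by
      intro q
      have h1 : ((e (τ0 q) : {x // x ∈ S}) : Fin (k^ℓ)) = σ (emb q) := by
        rw [hτ0]; simp
      refine (hcorr (τ0 q)).1 n q q.is_lt ?_
      rw [h1, hperm (emb q), hemb q, show m + n = ℓ by omega]
    have hdinj : Function.Injective d := by
      intro i1 i2 h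
      have hsurj := hbij.2
      obtain ⟨q1, rfl⟩ := hsurj i1
      obtain ⟨q2, rfl⟩ := hsurj i2
      rw [hdτ q1, hdτ q2] at h
      have hq : q1 = q2 := Fin.ext (by omega)
      rw [hq]
    refine ⟨d, hd, ?_, fun p => hdτ p⟩
    intro v
    have hle : (Finset.univ.filter (fun i => d i = v)).card ≤ 1 := by
      refine Finset.card_le_one.2 ?_
      intro a ha b2 hb2
      rw [Finset.mem_filter] at ha hb2
      exact hdinj (ha.2.trans hb2.2.symm)
    omega
  · intro q1 q2 hlt
    have h1 : (⟨σ (emb q1), hmem q1⟩ : {x // x ∈ S}) < ⟨σ (emb q2), hmem q2⟩ :=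
      Subtype.mk_lt_mk.2 (by exact hlt)
    exact e.symm.strictMono h1

end Stmt13Aux


/-- For `1 ≤ n ≤ ℓ`, `D_k(ℓ) ≤ D_k(n) · k^(ℓ-n)`. -/
theorem stmt13 (k ℓ n : ℕ) (hk : 2 ≤ k) (hn : 1 ≤ n) (hℓ : n ≤ ℓ) :
    Dmax k ℓ ≤ Dmax k n * k ^ (ℓ - n) := by
  classical
  set m := ℓ - n with hm
  have hmn : n + m = ℓ := by omega
  have hkn : 0 < k^n := pow_pos (by omega) n
  have hkm : 0 < k^m := pow_pos (by omega) m
  apply csSup_le'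
  intro dd hdd
  obtain ⟨σ, ⟨c, hreach, hstab, hperm⟩, pos, hposmono, hposanti⟩ := hdd
  have hdivlt : ∀ p : Fin (k^ℓ), (p:ℕ)/k^n < k^m := by
    intro p
    rw [Nat.div_lt_iff_lt_mul hkn]
    calc (p:ℕ) < k^ℓ := p.is_lt
      _ = k^m * k^n := by rw [← pow_add, show m + n = ℓ by omega]
  set g : Fin dd → Fin (k^m) := fun t => ⟨(pos t : ℕ)/k^n, hdivlt (pos t)⟩ with hg
  have hcard : dd = ∑ bb : Fin (k^m), (Finset.univ.filter (fun t => g t = bb)).card := by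
    have h1 := Finset.card_eq_sum_card_fiberwise
      (f := g) (s := Finset.univ) (t := Finset.univ) (fun x _ => Finset.mem_univ _)
    simpa using h1
  have hfiber : ∀ bb : Fin (k^m),
      (Finset.univ.filter (fun t => g t = bb)).card ≤ Dmax k n := by
    intro bb
    set F := Finset.univ.filter (fun t => g t = bb) with hF
    have hmemF : ∀ t ∈ F, (bb:ℕ) * k^n ≤ (pos t : ℕ) ∧ (pos t : ℕ) < (bb:ℕ)*k^n + k^n := by
      intro t ht
      rw [hF, Finset.mem_filter] at ht
      have h2 : ((pos t : ℕ))/(k^n) = (bb:ℕ) := congrArg Fin.val ht.2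
      have hcomm : k^n * (bb:ℕ) = (bb:ℕ)*k^n := mul_comm _ _
      obtain ⟨r, hr, hdm⟩ : ∃ r, r < k^n ∧ k^n * (bb:ℕ) + r = (pos t : ℕ) :=
        ⟨(pos t : ℕ) % k^n, Nat.mod_lt _ hkn, by rw [← h2]; exact Nat.div_add_mod _ _⟩
      omega
    have hembbd : ∀ q : Fin (k^n), (bb:ℕ)*k^n + q < k^ℓ := by
      intro q
      have hq := q.is_lt
      calc (bb:ℕ)*k^n + (q:ℕ) < (bb:ℕ)*k^n + k^n := by omega
        _ = ((bb:ℕ)+1)*k^n := by ring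
        _ ≤ k^m * k^n := Nat.mul_le_mul_right _ (by have := bb.is_lt; omega)
        _ = k^ℓ := by rw [← pow_add, show m + n = ℓ by omega]
    set emb : Fin (k^n) → Fin (k^ℓ) := fun q => ⟨(bb:ℕ)*k^n + q, hembbd q⟩ with hembdef
    obtain ⟨τ, ⟨d, hd, hstab', hperm'⟩, hτord⟩ :=
      Stmt13Aux.key k n ℓ m bb hk hmn bb.is_lt σ c hreach hperm emb (fun q => rfl)
    apply le_csSup
    · refine ⟨k^n, ?_⟩
      rintro x ⟨σ', _, pos', hmono', _⟩
      have h3 := Fintype.card_le_of_injective pos' hmono'.injective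
      simpa using h3
    · refine ⟨τ, ⟨d, hd, hstab', hperm'⟩, ?_⟩
      set cb := F.card with hcb
      set o := F.orderIsoOfFin hcb.symm with ho
      have hoF : ∀ s : Fin cb, ((o s : {x // x ∈ F}) : Fin dd) ∈ F := fun s => (o s).2
      have hbd : ∀ s : Fin cb, (pos ((o s : {x // x ∈ F}) : Fin dd) : ℕ) - (bb:ℕ)*k^n < k^n := by
        intro s
        have := hmemF _ (hoF s)
        omega
    -- pos2
      refine ⟨fun s => ⟨(pos ((o s : {x // x ∈ F}) : Fin dd) : ℕ) - (bb:ℕ)*k^n, hbd s⟩, ?_, ?_⟩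
      · intro s1 s2 hlt
        have h4 : ((o s1 : {x // x ∈ F}) : Fin dd) < ((o s2 : {x // x ∈ F}) : Fin dd) :=
          Subtype.coe_lt_coe.2 (o.strictMono hlt)
        have h5 := hposmono h4
        have h6 := hmemF _ (hoF s1)
        have h7 := hmemF _ (hoF s2)
        have h8 : (pos ((o s1 : {x // x ∈ F}) : Fin dd) : ℕ) <
            (pos ((o s2 : {x // x ∈ F}) : Fin dd) : ℕ) := h5
        exact Fin.mk_lt_mk.2 (by omega)
      · intro s1 s2 hlt
        have h4 : ((o s1 : {x // x ∈ F}) : Fin dd) < ((o s2 : {x // x ∈ F}) : Fin dd) :=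
          Subtype.coe_lt_coe.2 (o.strictMono hlt)
        have h5 := hposanti h4
        have hembeq : ∀ s : Fin cb,
            emb ⟨(pos ((o s : {x // x ∈ F}) : Fin dd) : ℕ) - (bb:ℕ)*k^n, hbd s⟩ =
            pos ((o s : {x // x ∈ F}) : Fin dd) := by
          intro s
          have := hmemF _ (hoF s)
          rw [hembdef]
          exact Fin.ext (by simp; omega)
        have h9 := hτord ⟨_, hbd s2⟩ ⟨_, hbd s1⟩ (by rw [hembeq s1, hembeq s2]; exact h5)
        exact h9
  calc dd = ∑ bb : Fin (k^m), (Finset.univ.filter (fun t => g t = bb)).card := hcard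
    _ ≤ ∑ _bb : Fin (k^m), Dmax k n := Finset.sum_le_sum (fun bb _ => hfiber bb)
    _ = k^m * Dmax k n := by
        rw [Finset.sum_const, Finset.card_univ, Fintype.card_fin, smul_eq_mul]
    _ = Dmax k n * k^m := mul_comm _ _
end

section
/- For every ℓ ≥ 1, D_k(ℓ) ≤ k^{ℓ−1}: every permutation attainable from k^ℓ chips has longest strictly decreasing subsequence of length at most k^{ℓ−1}. -/
/-!
Write `n(w)` for the number of chips in the subtree of `w`. A firing at `v` adds one chip to
the subtree of every child of `v` and changes no other `n`, so siblings always have equal `n`;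
hence a vertex `w` on layer `m + 1` has `k ^ m * n(w) ≤ k ^ ℓ`. A vertex `v` on layer `ℓ`
therefore has `n(v) ≤ k`: when it fires, its subtree holds just the `k` fired chips, so its
children were empty and receive these chips in increasing order, and no chip reaches them
afterwards.
So the attainable permutations increase on each of the `k ^ (ℓ - 1)` blocks of `k` siblings,
and a strictly decreasing subsequence meets each block at most once.
-/

namespace ChipFiring

open Finset

/-- The child of `v` with 0-based index `j`, as in `FireStep`. -/
def child (k v j : ℕ) : ℕ := k * (v - 1) + j + 2

def parent (k v : ℕ) : ℕ := (v - 2) / k + 1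

/-- `IsAncestor k w v`: `w` is reached from `v` by repeatedly taking parents (`w = v` allowed). -/
def IsAncestor (k w v : ℕ) : Prop :=
  Relation.ReflTransGen (fun x y => y = parent k x) v w

section Tree

variable {k : ℕ}

lemma one_le_parent (v : ℕ) : 1 ≤ parent k v := Nat.le_add_left 1 _

lemma parent_le {v : ℕ} (hv : 1 ≤ v) : parent k v ≤ v := by
  have : (v - 2) / k ≤ v - 2 := Nat.div_le_self _ _
  unfold parent
  omega

lemma lt_child {v : ℕ} (hk : 0 < k) (hv : 1 ≤ v) (j : ℕ) : v < child k v j := by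
  have : v - 1 ≤ k * (v - 1) := Nat.le_mul_of_pos_left _ hk
  unfold child
  omega

lemma two_le_child (v j : ℕ) : 2 ≤ child k v j := by
  unfold child
  omega

lemma parent_child {v j : ℕ} (hv : 1 ≤ v) (hj : j < k) : parent k (child k v j) = v := by
  have hdiv : (k * (v - 1) + j) / k = v - 1 := by
    rw [Nat.mul_add_div (by omega), Nat.div_eq_of_lt hj, add_zero]
  simp only [parent, child, Nat.add_sub_cancel, hdiv]
  omega

lemma child_eq_child_iff {u v i j : ℕ} (hu : 1 ≤ u) (hv : 1 ≤ v) (hi : i < k) (hj : j < k) :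
    child k u i = child k v j ↔ u = v ∧ i = j := by
  refine ⟨fun h => ?_, fun ⟨huv, hij⟩ => huv ▸ hij ▸ rfl⟩
  have huv : u = v := by
    rw [← parent_child hu hi, ← parent_child hv hj, h]
  subst huv
  unfold child at h
  omega

lemma isAncestor_refl (v : ℕ) : IsAncestor k v v := Relation.ReflTransGen.refl

lemma IsAncestor.trans {u v w : ℕ} (huv : IsAncestor k u v) (hvw : IsAncestor k v w) :
    IsAncestor k u w :=
  Relation.ReflTransGen.trans hvw huv

lemma IsAncestor.le {v w : ℕ} (hv : 1 ≤ v) (h : IsAncestor k w v) : w ≤ v := by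
  suffices w ≤ v ∧ 1 ≤ w from this.1
  induction h with
  | refl => exact ⟨le_rfl, hv⟩
  | tail _ hxy ih =>
    subst hxy
    exact ⟨(parent_le ih.2).trans ih.1, one_le_parent _⟩

lemma isAncestor_child_iff {v w j : ℕ} (hv : 1 ≤ v) (hj : j < k) :
    IsAncestor k w (child k v j) ↔ w = child k v j ∨ IsAncestor k w v := by
  unfold IsAncestor
  rw [Relation.ReflTransGen.cases_head_iff]
  simp only [parent_child hv hj, exists_eq_left', eq_comm]

lemma isAncestor_child {v j : ℕ} (hv : 1 ≤ v) (hj : j < k) : IsAncestor k v (child k v j) :=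
  (isAncestor_child_iff hv hj).2 (.inr (isAncestor_refl v))

/-- Comparability holds because every vertex has a single parent. -/
lemma IsAncestor.total {u w x : ℕ} (hu : IsAncestor k u x) (hw : IsAncestor k w x) :
    IsAncestor k u w ∨ IsAncestor k w u :=
  Relation.ReflTransGen.total_of_right_unique (fun _ _ _ h h' => h.trans h'.symm) hw hu

lemma not_isAncestor_of_isAncestor_child {u i j x : ℕ} (hk : 0 < k) (hu : 1 ≤ u)
    (hi : i < k) (hj : j < k) (hij : i ≠ j) (hx : IsAncestor k (child k u i) x) :
    ¬ IsAncestor k (child k u j) x := by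
  have key :
      ∀ a b, a < k → b < k → a ≠ b → ¬ IsAncestor k (child k u a) (child k u b) := by
    intro a b ha hb hab h
    rcases (isAncestor_child_iff hu hb).1 h with h | h
    · exact hab ((child_eq_child_iff hu hu ha hb).1 h).2
    · exact absurd (h.le hu) (lt_child hk hu a).not_ge
  intro hx'
  rcases hx.total hx' with h | h
  · exact key i j hi hj hij h
  · exact key j i hj hi (Ne.symm hij) h

end Tree

lemma one_le_layerStart (k m : ℕ) : 1 ≤ layerStart k m := by
  cases m <;> simp [layerStart]

lemma layerStart_succ_add (k m q : ℕ) :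
    layerStart k (m + 1) + q = child k (layerStart k m + q / k) (q % k) := by
  obtain ⟨s, hs⟩ : ∃ s, layerStart k m = s + 1 :=
    ⟨_, (Nat.sub_add_cancel (one_le_layerStart k m)).symm⟩
  conv_lhs => rw [← Nat.div_add_mod q k]
  simp only [layerStart, child, hs, Nat.add_sub_cancel, Nat.add_right_comm s 1 (q / k)]
  ring

section Subtree

variable {k N : ℕ}

open Classical in
noncomputable def subtreeChips (k : ℕ) (c : Fin N → ℕ) (w : ℕ) : Finset (Fin N) :=
  {i | IsAncestor k w (c i)}

lemma mem_subtreeChips {c : Fin N → ℕ} {w : ℕ} {i : Fin N} :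
    i ∈ subtreeChips k c w ↔ IsAncestor k w (c i) := by
  simp [subtreeChips]

def Balanced (k : ℕ) (c : Fin N → ℕ) : Prop :=
  ∀ v, 1 ≤ v → ∀ i < k, ∀ j < k,
    #(subtreeChips k c (child k v i)) = #(subtreeChips k c (child k v j))

lemma Balanced.mul_card_subtreeChips_child_le {c : Fin N → ℕ} (hbal : Balanced k c) {v j : ℕ}
    (hv : 1 ≤ v) (hj : j < k) :
    k * #(subtreeChips k c (child k v j)) ≤ #(subtreeChips k c v) := by
  classical
  have hdisj : ((range k : Finset ℕ) : Set ℕ).PairwiseDisjoint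
      (fun i => subtreeChips k c (child k v i)) := by
    intro a ha b hb hab
    simp only [coe_range, Set.mem_Iio] at ha hb
    refine Finset.disjoint_left.2 fun x hxa hxb => ?_
    rw [mem_subtreeChips] at hxa hxb
    exact not_isAncestor_of_isAncestor_child (by omega) hv ha hb hab hxa hxb
  have hsub :
      (range k).biUnion (fun i => subtreeChips k c (child k v i)) ⊆ subtreeChips k c v := by
    simp only [biUnion_subset, mem_range]
    intro i hi x hx
    rw [mem_subtreeChips] at hx ⊢
    exact (isAncestor_child hv hi).trans hx
  calc k * #(subtreeChips k c (child k v j))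
      = ∑ i ∈ range k, #(subtreeChips k c (child k v i)) := by
        rw [sum_congr rfl fun i hi => hbal v hv i (mem_range.1 hi) j hj]
        simp
    _ = #((range k).biUnion (fun i => subtreeChips k c (child k v i))) :=
        (card_biUnion hdisj).symm
    _ ≤ #(subtreeChips k c v) := card_le_card hsub

lemma Balanced.pow_mul_card_subtreeChips_le {c : Fin N → ℕ} (hbal : Balanced k c)
    (hk : 0 < k) :
    ∀ m p, p < k ^ m → k ^ m * #(subtreeChips k c (layerStart k m + p)) ≤ N
  | 0, p, hp => by
    obtain rfl : p = 0 := by simpa using hp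
    simpa using card_le_univ (subtreeChips k c (layerStart k 0 + 0))
  | m + 1, p, hp => by
    have hpk : p / k < k ^ m := by rwa [Nat.div_lt_iff_lt_mul hk, ← pow_succ]
    calc k ^ (m + 1) * #(subtreeChips k c (layerStart k (m + 1) + p))
        = k ^ m * (k * #(subtreeChips k c (child k (layerStart k m + p / k) (p % k)))) := by
          rw [layerStart_succ_add, pow_succ, mul_assoc]
      _ ≤ k ^ m * #(subtreeChips k c (layerStart k m + p / k)) :=
          Nat.mul_le_mul_left _ (hbal.mul_card_subtreeChips_child_le
            ((one_le_layerStart k m).trans (Nat.le_add_right _ _)) (Nat.mod_lt _ hk))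
      _ ≤ N := hbal.pow_mul_card_subtreeChips_le hk m _ hpk

end Subtree

/-- `layerStart k m + p` is on layer `m + 1`, so for `m = ℓ - 1` this concerns the leaves. -/
def SiblingsOrdered (k m : ℕ) {N : ℕ} (c : Fin N → ℕ) : Prop :=
  ∀ p < k ^ m, ∀ (a b : Fin N) (i j : ℕ), i < j → j < k →
    c a = child k (layerStart k m + p) i → c b = child k (layerStart k m + p) j → a < b

structure IsFiring (k : ℕ) {N : ℕ} (c c' : Fin N → ℕ) (v : ℕ) (t : Fin k → Fin N) :
    Prop where
  strictMono : StrictMono t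
  source : ∀ j, c (t j) = v
  target : ∀ j : Fin k, c' (t j) = child k v j
  rest : ∀ i, (∀ j, i ≠ t j) → c' i = c i

lemma fireStep_iff {k N : ℕ} {c c' : Fin N → ℕ} :
    FireStep k N c c' ↔ ∃ v t, IsFiring k c c' v t :=
  ⟨fun ⟨v, t, h₁, h₂, h₃, h₄⟩ => ⟨v, t, h₁, h₂, h₃, h₄⟩,
    fun ⟨v, t, h₁, h₂, h₃, h₄⟩ => ⟨v, t, h₁, h₂, h₃, h₄⟩⟩

namespace IsFiring

variable {k N v : ℕ} {c c' : Fin N → ℕ} {t : Fin k → Fin N}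

lemma fired_or_eq (hf : IsFiring k c c' v t) (i : Fin N) :
    (∃ j, i = t j) ∨ (∀ j, i ≠ t j) ∧ c' i = c i := by
  by_cases h : ∃ j, i = t j
  · exact .inl h
  · rw [not_exists] at h
    exact .inr ⟨h, hf.rest i h⟩

lemma subtreeChips_eq (hf : IsFiring k c c' v t) (hv : 1 ≤ v) {w : ℕ}
    (hw : ∀ j : Fin k, w ≠ child k v j) : subtreeChips k c' w = subtreeChips k c w := by
  ext i
  simp only [mem_subtreeChips]
  rcases hf.fired_or_eq i with ⟨j, rfl⟩ | hi
  · rw [hf.target, hf.source, isAncestor_child_iff hv j.isLt, or_iff_right (hw j)]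
  · rw [hi.2]

lemma subtreeChips_child (hf : IsFiring k c c' v t) (hv : 1 ≤ v) (j : Fin k) :
    subtreeChips k c' (child k v j) = insert (t j) (subtreeChips k c (child k v j)) := by
  ext i
  simp only [mem_insert, mem_subtreeChips]
  rcases hf.fired_or_eq i with ⟨j', rfl⟩ | hi
  · have hnot : ¬ IsAncestor k (child k v j) v :=
      fun h => (h.le hv).not_gt (lt_child j.pos hv j)
    rw [hf.target, hf.source, isAncestor_child_iff hv j'.isLt,
      child_eq_child_iff hv hv j.isLt j'.isLt, hf.strictMono.injective.eq_iff]
    simp [hnot, Fin.ext_iff, eq_comm]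
  · simp [hi.1 j, hi.2]

lemma card_subtreeChips_child (hf : IsFiring k c c' v t) (hv : 1 ≤ v) (j : Fin k) :
    #(subtreeChips k c' (child k v j)) = #(subtreeChips k c (child k v j)) + 1 := by
  rw [hf.subtreeChips_child hv, card_insert_of_notMem]
  rw [mem_subtreeChips, hf.source]
  exact fun h => (h.le hv).not_gt (lt_child j.pos hv j)

lemma one_le_apply (hf : IsFiring k c c' v t) (hpos : ∀ i, 1 ≤ c i) (i : Fin N) :
    1 ≤ c' i := by
  rcases hf.fired_or_eq i with ⟨j, rfl⟩ | hi
  · rw [hf.target]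
    exact one_le_two.trans (two_le_child v j)
  · exact hi.2 ▸ hpos i

lemma balanced (hf : IsFiring k c c' v t) (hv : 1 ≤ v) (hbal : Balanced k c) :
    Balanced k c' := by
  intro u hu i hi j hj
  by_cases huv : u = v
  · subst huv
    rw [hf.card_subtreeChips_child hv ⟨i, hi⟩, hf.card_subtreeChips_child hv ⟨j, hj⟩,
      hbal u hu i hi j hj]
  · have hunchanged :
        ∀ i < k, subtreeChips k c' (child k u i) = subtreeChips k c (child k u i) :=
      fun i hi => hf.subtreeChips_eq hv fun j' h =>
        huv ((child_eq_child_iff hu hv hi j'.isLt).1 h).1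
    rw [hunchanged i hi, hunchanged j hj]
    exact hbal u hu i hi j hj

lemma exists_eq_of_isAncestor (hf : IsFiring k c c' v t) (hcard : #(subtreeChips k c v) ≤ k)
    {i : Fin N} (hi : IsAncestor k v (c i)) : ∃ j, i = t j := by
  classical
  have himage : univ.image t ⊆ subtreeChips k c v := by
    intro x hx
    obtain ⟨j, -, rfl⟩ := mem_image.1 hx
    rw [mem_subtreeChips, hf.source]
    exact isAncestor_refl v
  have heq : univ.image t = subtreeChips k c v := by
    refine eq_of_subset_of_card_le himage ?_
    rwa [card_image_of_injective _ hf.strictMono.injective, card_univ, Fintype.card_fin]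
  obtain ⟨j, -, hj⟩ := mem_image.1 (heq ▸ mem_subtreeChips.2 hi)
  exact ⟨j, hj.symm⟩

lemma siblingsOrdered (hf : IsFiring k c c' v t) (hv : 1 ≤ v) (hbal : Balanced k c) {m : ℕ}
    (hN : N ≤ k ^ (m + 1)) (hord : SiblingsOrdered k m c) : SiblingsOrdered k m c' := by
  intro p hp a b i j hij hjk ha hb
  have hk : 0 < k := by omega
  have hu : 1 ≤ layerStart k m + p := (one_le_layerStart k m).trans (Nat.le_add_right _ _)
  by_cases huv : layerStart k m + p = v
  · subst huv
    have hcard : #(subtreeChips k c (layerStart k m + p)) ≤ k := by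
      refine Nat.le_of_mul_le_mul_left ?_ (pow_pos hk m)
      rw [← pow_succ]
      exact (hbal.pow_mul_card_subtreeChips_le hk m p hp).trans hN
    -- the subtree of `v` holds only the `k` chips being fired, so its children were empty
    have hfired : ∀ x (i' : Fin k), c' x = child k (layerStart k m + p) i' → x = t i' := by
      intro x i' hx
      rcases hf.fired_or_eq x with ⟨j', rfl⟩ | ⟨hx', hxc⟩
      · rw [hf.target, child_eq_child_iff hu hu j'.isLt i'.isLt] at hx
        rw [Fin.ext hx.2]
      · rw [hxc] at hx
        obtain ⟨j', rfl⟩ :=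
          hf.exists_eq_of_isAncestor hcard (hx ▸ isAncestor_child hu i'.isLt)
        exact absurd rfl (hx' j')
    rw [hfired a ⟨i, by omega⟩ ha, hfired b ⟨j, hjk⟩ hb]
    exact hf.strictMono (Fin.mk_lt_mk.2 hij)
  · have hkept : ∀ x i', i' < k → c' x = child k (layerStart k m + p) i' →
        c x = child k (layerStart k m + p) i' := by
      intro x i' hi' hx
      rcases hf.fired_or_eq x with ⟨j', rfl⟩ | ⟨-, hxc⟩
      · rw [hf.target, child_eq_child_iff hv hu j'.isLt hi'] at hx
        exact absurd hx.1.symm huv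
      · rwa [← hxc]
    exact hord p hp a b i j hij hjk (hkept a i (by omega) ha) (hkept b j hjk hb)

end IsFiring

structure Invariant (k m : ℕ) {N : ℕ} (c : Fin N → ℕ) : Prop where
  one_le : ∀ i, 1 ≤ c i
  balanced : Balanced k c
  siblingsOrdered : SiblingsOrdered k m c

lemma invariant_const_one (k m N : ℕ) : Invariant k m (fun _ : Fin N => 1) := by
  have not_ancestor : ∀ v j, ¬ IsAncestor k (child k v j) 1 :=
    fun v j h => (h.le le_rfl).not_gt (two_le_child v j)
  refine ⟨fun _ => le_rfl, ?_, ?_⟩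
  · intro v _ i _ j _
    simp [subtreeChips, not_ancestor]
  · intro p _ a _ i _ _ _ ha
    exact absurd ha (one_lt_two.trans_le (two_le_child _ i)).ne

lemma Invariant.fireStep {k m N : ℕ} {c c' : Fin N → ℕ} (hk : 0 < k) (hN : N ≤ k ^ (m + 1))
    (hc : Invariant k m c) (hstep : FireStep k N c c') : Invariant k m c' := by
  obtain ⟨v, t, hf⟩ := fireStep_iff.1 hstep
  have hv : 1 ≤ v := hf.source ⟨0, hk⟩ ▸ hc.one_le (t ⟨0, hk⟩)
  exact ⟨hf.one_le_apply hc.one_le, hf.balanced hv hc.balanced,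
    hf.siblingsOrdered hv hc.balanced hN hc.siblingsOrdered⟩

lemma invariant_of_reflTransGen {k m N : ℕ} {c : Fin N → ℕ} (hk : 0 < k)
    (hN : N ≤ k ^ (m + 1)) (hc : Relation.ReflTransGen (FireStep k N) (fun _ => 1) c) :
    Invariant k m c := by
  induction hc with
  | refl => exact invariant_const_one k m N
  | tail _ hstep ih => exact ih.fireStep hk hN hstep

end ChipFiring

open ChipFiring

lemma HasDecSubseq.le_of_increasing_on_blocks {M k n d : ℕ} {f : Fin M → ℕ} (hk : 0 < k)
    (hM : M ≤ k * n) (hf : ∀ q r : Fin M, q < r → (q : ℕ) / k = r / k → f q < f r)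
    (h : HasDecSubseq M f d) : d ≤ n := by
  obtain ⟨pos, hpos, hanti⟩ := h
  have hblock : ∀ s, (pos s : ℕ) / k < n := fun s =>
    (Nat.div_lt_iff_lt_mul hk).2 ((pos s).isLt.trans_le (hM.trans_eq (mul_comm k n)))
  have hne : ∀ s s', s < s' → (pos s : ℕ) / k ≠ pos s' / k :=
    fun s s' hss' heq => (hanti hss').not_gt (hf _ _ (hpos hss') heq)
  refine Fin.le_of_injective (fun s => ⟨(pos s : ℕ) / k, hblock s⟩) fun s s' heq => ?_
  by_contra hss'
  rcases lt_or_gt_of_ne hss' with h | h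
  · exact hne s s' h (Fin.mk.inj heq)
  · exact hne s' s h (Fin.mk.inj heq).symm

lemma Attainable.lt_of_div_eq {k m : ℕ} (hk : 0 < k) {σ : Equiv.Perm (Fin (k ^ (m + 1)))}
    (hσ : Attainable k (m + 1) σ) {q r : Fin (k ^ (m + 1))} (hqr : q < r)
    (hdiv : (q : ℕ) / k = r / k) : (σ q : ℕ) < σ r := by
  obtain ⟨c, hreach, -, hpos⟩ := hσ
  have hq := Nat.div_add_mod q k
  have hr := Nat.div_add_mod r k
  refine (invariant_of_reflTransGen hk le_rfl hreach).siblingsOrdered (q / k) ?_ (σ q) (σ r)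
    (q % k) (r % k) ?_ (Nat.mod_lt _ hk) ?_ ?_
  · rw [Nat.div_lt_iff_lt_mul hk, ← pow_succ]
    exact q.isLt
  · rw [hdiv] at hq
    omega
  · rw [hpos q, layerStart_succ_add]
  · rw [hpos r, layerStart_succ_add, hdiv]

/-- `D_k(ℓ) ≤ k^(ℓ-1)`: every permutation attainable from `k^ℓ` chips has longest
strictly decreasing subsequence of length at most `k^(ℓ-1)`. -/
theorem stmt14 (k ℓ : ℕ) (hk : 2 ≤ k) (hℓ : 1 ≤ ℓ) :
    Dmax k ℓ ≤ k ^ (ℓ - 1) ∧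
    ∀ σ : Equiv.Perm (Fin (k ^ ℓ)), Attainable k ℓ σ →
      ∀ d, HasDecSubseq (k ^ ℓ) (fun p => (σ p : ℕ)) d → d ≤ k ^ (ℓ - 1) := by
  obtain ⟨m, rfl⟩ : ∃ m, ℓ = m + 1 := ⟨ℓ - 1, by omega⟩
  have hk₀ : 0 < k := by omega
  have bound : ∀ σ : Equiv.Perm (Fin (k ^ (m + 1))), Attainable k (m + 1) σ →
      ∀ d, HasDecSubseq (k ^ (m + 1)) (fun p => (σ p : ℕ)) d → d ≤ k ^ (m + 1 - 1) :=
    fun σ hσ d hd => hd.le_of_increasing_on_blocks hk₀ (pow_succ' k m).le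
      fun _ _ => hσ.lt_of_div_eq hk₀
  exact ⟨csSup_le' fun d ⟨σ, hσ, hd⟩ => bound σ hσ d hd, bound⟩
end

section
/- D_k(2) = k: the maximum, over all permutations of {1,…,k^2} attainable from k^2 chips, of the length of the longest strictly decreasing subsequence equals k. -/
namespace Stmt16

def S (k : ℕ) (c : Fin (k^2) → ℕ) (j : ℕ) : ℕ :=
  (Finset.univ.filter (fun i => c i = j + 2 ∨ (k*j + k + 2 ≤ c i ∧ c i ≤ k*j + 2*k + 1))).card

def R (k : ℕ) (c : Fin (k^2) → ℕ) : ℕ := (Finset.univ.filter (fun i => c i = 1)).card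

def Inv (k : ℕ) (c : Fin (k^2) → ℕ) : Prop :=
  (∀ i, 1 ≤ c i ∧ c i ≤ k*k + k + 1) ∧
  (∀ j, j < k → S k c j = S k c 0) ∧
  (R k c + k * S k c 0 = k * k) ∧
  (∀ w, k + 2 ≤ w → (Finset.univ.filter (fun i => c i = w)).card ≤ 1) ∧
  (∀ i i' : Fin (k^2), k + 2 ≤ c i → k + 2 ≤ c i' →
      (c i - 2) / k = (c i' - 2) / k → i < i' → c i < c i')

lemma inv_init (k : ℕ) (hk : 2 ≤ k) : Inv k (fun _ => 1) := by
  refine ⟨fun i => ⟨le_refl 1, by nlinarith⟩, ?_, ?_, ?_, ?_⟩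
  · intro j hj
    have h1 : S k (fun _ => 1) j = 0 := by
      rw [S, Finset.card_eq_zero, Finset.filter_eq_empty_iff]
      intro i _
      have : 0 ≤ k*j := Nat.zero_le _
      omega
    have h2 : S k (fun _ => 1) 0 = 0 := by
      rw [S, Finset.card_eq_zero, Finset.filter_eq_empty_iff]
      intro i _
      have : 0 ≤ k*0 := Nat.zero_le _
      omega
    rw [h1, h2]
  · have h2 : S k (fun _ => 1) 0 = 0 := by
      rw [S, Finset.card_eq_zero, Finset.filter_eq_empty_iff]
      intro i _
      have : 0 ≤ k*0 := Nat.zero_le _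
      omega
    have h3 : R k (fun _ => 1) = k^2 := by
      rw [R]
      simp
    rw [h2, h3, pow_two]
    ring
  · intro w hw
    have : (Finset.univ.filter (fun (_ : Fin (k^2)) => (1:ℕ) = w)) = ∅ := by
      rw [Finset.filter_eq_empty_iff]
      intro i _
      omega
    rw [this]
    simp
  · intro i i' hi
    simp only [show ((fun (_ : Fin (k^2)) => (1:ℕ)) i) = 1 from rfl] at hi
    omega

end Stmt16

namespace Stmt16

lemma inv_step {k : ℕ} (hk : 2 ≤ k) {c c' : Fin (k^2) → ℕ}
    (h : Inv k c) (hs : FireStep k (k^2) c c') : Inv k c' := by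
  obtain ⟨hI1, hI2, hId, hI3, hI4⟩ := h
  obtain ⟨v, t, ht, hct, hct', hother⟩ := hs
  have hkpos : 0 < k := by omega
  have htinj : Function.Injective t := ht.injective
  have hv1 : 1 ≤ v := (hct ⟨0, hkpos⟩) ▸ (hI1 (t ⟨0, hkpos⟩)).1
  have hmono : ∀ a b : ℕ, a < b → k*a + k ≤ k*b := by
    intro a b hab
    have h1 : k*(a+1) ≤ k*b := Nat.mul_le_mul_left k hab
    rw [Nat.mul_add, Nat.mul_one] at h1
    exact h1
  have hTsub : (Finset.univ.image t) ⊆ Finset.univ.filter (fun i => c i = v) := by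
    intro x hx
    simp only [Finset.mem_image] at hx
    obtain ⟨m, _, rfl⟩ := hx
    simp [Finset.mem_filter, hct]
  have hTcard : (Finset.univ.image t).card = k := by
    rw [Finset.card_image_of_injective _ htinj, Finset.card_univ, Fintype.card_fin]
  have hvk : k ≤ (Finset.univ.filter (fun i => c i = v)).card := by
    have := Finset.card_le_card hTsub
    omega
  by_cases hv3 : k + 2 ≤ v
  · exfalso
    have := hI3 v hv3
    omega
  push_neg at hv3
  by_cases hv2 : v = 1
  · -- root firing
    subst hv2
    have hb : ∀ m : Fin k, c' (t m) = (m:ℕ) + 2 := by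
      intro m
      rw [hct' m]
      norm_num
    have hkk : k ≤ k*k := Nat.le_mul_of_pos_left k hkpos
    have hSj : ∀ j, j < k → S k c' j = S k c j + 1 := by
      intro j hj
      have hjk0 : 0 ≤ k*j := Nat.zero_le _
      have hset : (Finset.univ.filter (fun i => c' i = j + 2 ∨ (k*j + k + 2 ≤ c' i ∧ c' i ≤ k*j + 2*k + 1)))
          = insert (t ⟨j, hj⟩) (Finset.univ.filter (fun i => c i = j + 2 ∨ (k*j + k + 2 ≤ c i ∧ c i ≤ k*j + 2*k + 1))) := by
        ext i
        simp only [Finset.mem_filter, Finset.mem_insert, Finset.mem_univ, true_and]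
        by_cases hfi : ∃ m, i = t m
        · obtain ⟨m, rfl⟩ := hfi
          rw [hb m, hct m]
          have hmk : (m:ℕ) < k := m.isLt
          constructor
          · intro hP
            left
            have : (m:ℕ) = j := by omega
            congr 1
            exact Fin.ext this
          · intro hP
            rcases hP with hP | hP
            · have : m = (⟨j, hj⟩ : Fin k) := htinj hP
              have : (m:ℕ) = j := by rw [this]
              omega
            · omega
        · push_neg at hfi
          rw [hother i hfi]
          constructor
          · intro hP; right; exact hP
          · intro hP
            rcases hP with hP | hP
            · exact absurd hP (hfi _)
            · exact hP
      have hnot : t ⟨j, hj⟩ ∉ Finset.univ.filter (fun i => c i = j + 2 ∨ (k*j + k + 2 ≤ c i ∧ c i ≤ k*j + 2*k + 1)) := by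
        simp only [Finset.mem_filter, Finset.mem_univ, true_and, hct]
        have hjk0 : 0 ≤ k*j := Nat.zero_le _
        omega
      rw [S, S, hset, Finset.card_insert_of_notMem hnot]
    have hR : R k c' + k = R k c := by
      have hset : (Finset.univ.filter (fun i => c' i = 1))
          = (Finset.univ.filter (fun i => c i = 1)) \ (Finset.univ.image t) := by
        ext i
        simp only [Finset.mem_filter, Finset.mem_sdiff, Finset.mem_univ, true_and, Finset.mem_image]
        by_cases hfi : ∃ m, i = t m
        · obtain ⟨m, rfl⟩ := hfi
          rw [hb m]
          constructor
          · intro hP; omega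
          · intro hP; exact absurd ⟨m, rfl⟩ hP.2
        · push_neg at hfi
          rw [hother i hfi]
          constructor
          · intro hP
            refine ⟨hP, ?_⟩
            rintro ⟨m, rfl⟩
            exact (hfi m) rfl
          · intro hP; exact hP.1
      rw [R, R, hset, Finset.card_sdiff_of_subset hTsub, hTcard]
      have := Finset.card_le_card hTsub
      omega
    refine ⟨?_, ?_, ?_, ?_, ?_⟩
    · intro i
      by_cases hfi : ∃ m, i = t m
      · obtain ⟨m, rfl⟩ := hfi
        rw [hb m]
        have := m.isLt
        omega
      · push_neg at hfi
        rw [hother i hfi]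
        exact hI1 i
    · intro j hj
      rw [hSj j hj, hSj 0 hkpos, hI2 j hj]
    · rw [hSj 0 hkpos]
      have hm : k * (S k c 0 + 1) = k * S k c 0 + k := by ring
      omega
    · intro w hw
      have hset : (Finset.univ.filter (fun i => c' i = w)) = (Finset.univ.filter (fun i => c i = w)) := by
        apply Finset.filter_congr
        intro i _
        by_cases hfi : ∃ m, i = t m
        · obtain ⟨m, rfl⟩ := hfi
          rw [hb m, hct m]
          have := m.isLt
          omega
        · push_neg at hfi
          rw [hother i hfi]
      rw [hset]
      exact hI3 w hw
    · intro i i' h1 h2 h3 hlt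
      have hnf : ∀ x : Fin (k^2), k + 2 ≤ c' x → (∀ m, x ≠ t m) := by
        intro x hx m hxm
        rw [hxm, hb m] at hx
        have := m.isLt
        omega
      have e1 := hother i (hnf i h1)
      have e2 := hother i' (hnf i' h2)
      rw [e1] at h1
      rw [e2] at h2
      rw [e1, e2] at h3
      rw [e1, e2]
      exact hI4 i i' h1 h2 h3 hlt
  · -- layer-2 firing : v = j + 2
    have hv2' : 2 ≤ v := by omega
    set j := v - 2 with hjdef
    have hveq : v = j + 2 := by omega
    have hj : j < k := by omega
    have hjk0 : 0 ≤ k*j := Nat.zero_le _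
    have hb : ∀ m : Fin k, c' (t m) = k*j + k + (m:ℕ) + 2 := by
      intro m
      have hv1' : v - 1 = j + 1 := by omega
      rw [hct' m, hv1', Nat.mul_add, Nat.mul_one]
    -- children of v are empty
    have hSsplit : S k c j = (Finset.univ.filter (fun i => c i = j + 2)).card
        + (Finset.univ.filter (fun i => k*j + k + 2 ≤ c i ∧ c i ≤ k*j + 2*k + 1)).card := by
      rw [S, Finset.filter_or, Finset.card_union_of_disjoint]
      rw [Finset.disjoint_left]
      intro a ha hb'
      simp only [Finset.mem_filter, Finset.mem_univ, true_and] at ha hb'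
      have hjj : j ≤ k*j := Nat.le_mul_of_pos_left j hkpos
      omega
    have hSjk : S k c j ≤ k := by
      have h1 : k * S k c j ≤ k * k := by
        rw [hI2 j hj]
        omega
      exact Nat.le_of_mul_le_mul_left h1 hkpos
    have hvcard : (Finset.univ.filter (fun i => c i = j + 2)).card = (Finset.univ.filter (fun i => c i = v)).card := by
      congr 1
      ext i
      simp only [Finset.mem_filter, hveq]
    have hempty : ∀ i : Fin (k^2), ¬ (k*j + k + 2 ≤ c i ∧ c i ≤ k*j + 2*k + 1) := by
      have hc0 : (Finset.univ.filter (fun i => k*j + k + 2 ≤ c i ∧ c i ≤ k*j + 2*k + 1)).card = 0 := by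
        omega
      rw [Finset.card_eq_zero, Finset.filter_eq_empty_iff] at hc0
      intro i
      exact hc0 (Finset.mem_univ i)
    have hdisj : ∀ (b m : ℕ), m < k → j ≠ b → ¬(k*b + k + 2 ≤ k*j + k + m + 2 ∧ k*j + k + m + 2 ≤ k*b + 2*k + 1) := by
      intro b m hm hab
      rcases Nat.lt_or_ge j b with hlt | hge
      · have := hmono j b hlt
        omega
      · have hlt : b < j := by omega
        have := hmono b j hlt
        omega
    -- all S values unchanged
    have hSS : ∀ j', j' < k → S k c' j' = S k c j' := by
      intro j' hj'
      have hjj' : 0 ≤ k*j' := Nat.zero_le _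
      unfold S
      apply congrArg Finset.card
      apply Finset.filter_congr
      intro i _
      by_cases hfi : ∃ m, i = t m
      · obtain ⟨m, rfl⟩ := hfi
        rw [hb m, hct m, hveq]
        have hm : (m:ℕ) < k := m.isLt
        by_cases hjj : j = j'
        · subst hjj
          constructor
          · intro _; left; rfl
          · intro _; right; omega
        · constructor
          · intro hP
            rcases hP with hP | hP
            · exact absurd (by omega : j = j') hjj
            · exact absurd hP (hdisj j' (m:ℕ) hm hjj)
          · intro hP
            have hjjk : j ≤ k*j := Nat.le_mul_of_pos_left j hkpos
            have hjjk' : j' ≤ k*j' := Nat.le_mul_of_pos_left j' hkpos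
            omega
      · push_neg at hfi
        rw [hother i hfi]
    have hRR : R k c' = R k c := by
      unfold R
      apply congrArg Finset.card
      apply Finset.filter_congr
      intro i _
      by_cases hfi : ∃ m, i = t m
      · obtain ⟨m, rfl⟩ := hfi
        rw [hb m, hct m, hveq]
        omega
      · push_neg at hfi
        rw [hother i hfi]
    -- block of fired chips
    have hblk : ∀ m : ℕ, m < k → (k*j + k + m + 2 - 2) / k = j + 1 := by
      intro m hm
      have h1 : k*j + k + m + 2 - 2 = k*(j+1) + m := by
        rw [Nat.mul_add, Nat.mul_one]
        omega
      rw [h1, Nat.mul_add_div hkpos, Nat.div_eq_of_lt hm]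
    have hunfired_block : ∀ x : Fin (k^2), k + 2 ≤ c x → (c x - 2) / k = j + 1 → False := by
      intro x hx hbx
      have hdm := Nat.div_add_mod (c x - 2) k
      have hr : (c x - 2) % k < k := Nat.mod_lt _ hkpos
      rw [hbx] at hdm
      rw [Nat.mul_add, Nat.mul_one] at hdm
      exact hempty x (by omega)
    refine ⟨?_, ?_, ?_, ?_, ?_⟩
    · intro i
      by_cases hfi : ∃ m, i = t m
      · obtain ⟨m, rfl⟩ := hfi
        rw [hb m]
        have hm : (m:ℕ) < k := m.isLt
        have h1 : k*(j+1) ≤ k*k := Nat.mul_le_mul_left k (by omega)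
        rw [Nat.mul_add, Nat.mul_one] at h1
        omega
      · push_neg at hfi
        rw [hother i hfi]
        exact hI1 i
    · intro j' hj'
      rw [hSS j' hj', hSS 0 hkpos, hI2 j' hj']
    · rw [hSS 0 hkpos, hRR]
      exact hId
    · intro w hw
      by_cases hwin : k*j + k + 2 ≤ w ∧ w ≤ k*j + 2*k + 1
      · have hm0 : w - (k*j + k + 2) < k := by omega
        have hset : (Finset.univ.filter (fun i => c' i = w)) = {t ⟨w - (k*j + k + 2), hm0⟩} := by
          ext i
          simp only [Finset.mem_filter, Finset.mem_univ, true_and, Finset.mem_singleton]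
          by_cases hfi : ∃ m, i = t m
          · obtain ⟨m, rfl⟩ := hfi
            rw [hb m]
            constructor
            · intro hP
              congr 1
              apply Fin.ext
              simp only
              omega
            · intro hP
              have hm' : m = (⟨w - (k*j + k + 2), hm0⟩ : Fin k) := htinj hP
              have hmv : (m:ℕ) = w - (k*j + k + 2) := by rw [hm']
              omega
          · push_neg at hfi
            rw [hother i hfi]
            constructor
            · intro hP
              exact absurd (by omega : k*j + k + 2 ≤ c i ∧ c i ≤ k*j + 2*k + 1) (hempty i)
            · intro hP
              exact absurd hP (hfi _)
        rw [hset, Finset.card_singleton]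
      · have hset : (Finset.univ.filter (fun i => c' i = w)) = (Finset.univ.filter (fun i => c i = w)) := by
          apply Finset.filter_congr
          intro i _
          by_cases hfi : ∃ m, i = t m
          · obtain ⟨m, rfl⟩ := hfi
            rw [hb m, hct m, hveq]
            have hm : (m:ℕ) < k := m.isLt
            omega
          · push_neg at hfi
            rw [hother i hfi]
        rw [hset]
        exact hI3 w hw
    · intro i i' h1 h2 h3 hlt
      by_cases hfi : ∃ m, i = t m
      · obtain ⟨m, rfl⟩ := hfi
        by_cases hfi' : ∃ m', i' = t m'
        · obtain ⟨m', rfl⟩ := hfi'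
          rw [hb m, hb m']
          have hmm : m < m' := by
            rcases lt_trichotomy m m' with h | h | h
            · exact h
            · exact absurd h (by intro he; rw [he] at hlt; exact lt_irrefl _ hlt)
            · exact absurd (ht h) (by omega)
          have : (m:ℕ) < (m':ℕ) := hmm
          omega
        · push_neg at hfi'
          exfalso
          rw [hother i' hfi'] at h2 h3
          rw [hb m] at h3 h1
          rw [hblk (m:ℕ) m.isLt] at h3
          exact hunfired_block i' h2 h3.symm
      · push_neg at hfi
        by_cases hfi' : ∃ m', i' = t m'
        · obtain ⟨m', rfl⟩ := hfi'
          exfalso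
          rw [hother i hfi] at h1 h3
          rw [hb m'] at h3 h2
          rw [hblk (m':ℕ) m'.isLt] at h3
          exact hunfired_block i h1 h3
        · push_neg at hfi'
          rw [hother i hfi, hother i' hfi'] at *
          exact hI4 i i' h1 h2 h3 hlt

end Stmt16

namespace Stmt16

lemma inv_reachable {k : ℕ} (hk : 2 ≤ k) {c : Fin (k^2) → ℕ} (h : Reachable k 2 c) : Inv k c := by
  induction h with
  | refl => exact inv_init k hk
  | tail _ hstep ih => exact inv_step hk ih hstep

lemma upper {k : ℕ} (hk : 2 ≤ k) {σ : Equiv.Perm (Fin (k^2))} (hσ : Attainable k 2 σ)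
    {d : ℕ} (hd : HasDecSubseq (k^2) (fun p => (σ p : ℕ)) d) : d ≤ k := by
  have hkpos : 0 < k := by omega
  obtain ⟨c, hre, _, hpl⟩ := hσ
  obtain ⟨_, _, _, _, hI4⟩ := inv_reachable hk hre
  have hls : layerStart k 2 = k + 2 := by simp [layerStart]
  have hb : ∀ q : ℕ, (k + 2 + q - 2)/k = 1 + q/k := by
    intro q
    have h1 : k + 2 + q - 2 = k*1 + q := by omega
    rw [h1, Nat.mul_add_div hkpos]
  have key : ∀ p p' : Fin (k^2), (p:ℕ)/k = (p':ℕ)/k → p < p' → (σ p : ℕ) < (σ p' : ℕ) := by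
    intro p p' hpp hlt
    have hcp : c (σ p) = k + 2 + (p:ℕ) := by rw [hpl p, hls]
    have hcp' : c (σ p') = k + 2 + (p':ℕ) := by rw [hpl p', hls]
    rcases lt_trichotomy (σ p) (σ p') with h | h | h
    · exact h
    · exact absurd (σ.injective h) (by intro he; rw [he] at hlt; exact lt_irrefl _ hlt)
    · exfalso
      have h1 : k + 2 ≤ c (σ p) := by omega
      have h2 : k + 2 ≤ c (σ p') := by omega
      have h3 : (c (σ p') - 2) / k = (c (σ p) - 2) / k := by
        rw [hcp, hcp', hb, hb, hpp]
      have := hI4 (σ p') (σ p) h2 h1 h3 h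
      omega
  obtain ⟨pos, hpos, hanti⟩ := hd
  have hdiv : ∀ p : Fin (k^2), (p:ℕ)/k < k := by
    intro p
    have h := p.isLt
    have e : k^2 = k*k := pow_two k
    exact Nat.div_lt_of_lt_mul (by omega)
  have hg : StrictMono (fun a : Fin d => (⟨(pos a : ℕ)/k, hdiv _⟩ : Fin k)) := by
    intro a b hab
    have h1 : pos a < pos b := hpos hab
    have h2 : (pos a:ℕ)/k ≤ (pos b:ℕ)/k := Nat.div_le_div_right (le_of_lt h1)
    rcases eq_or_lt_of_le h2 with he | hl
    · exfalso
      have h3 := key (pos a) (pos b) he h1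
      have h4 : ((σ (pos b)):ℕ) < ((σ (pos a)):ℕ) := hanti hab
      omega
    · exact hl
  calc d = Fintype.card (Fin d) := (Fintype.card_fin d).symm
    _ ≤ Fintype.card (Fin k) := Fintype.card_le_of_injective _ hg.injective
    _ = k := Fintype.card_fin k

lemma moddiv {k : ℕ} (hkpos : 0 < k) (a b : ℕ) (hb : b < k) :
    (k*a + b) % k = b ∧ (k*a + b)/k = a := by
  constructor
  · rw [Nat.mul_add_mod, Nat.mod_eq_of_lt hb]
  · rw [Nat.mul_add_div hkpos, Nat.div_eq_of_lt hb, Nat.add_zero]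

def cfgA (k r : ℕ) : Fin (k^2) → ℕ := fun n => if (n:ℕ) < r*k then (n:ℕ) % k + 2 else 1

def cfgB (k s : ℕ) : Fin (k^2) → ℕ :=
  fun n => if (n:ℕ) % k < s then k*((n:ℕ)%k + 1) + (n:ℕ)/k + 2 else (n:ℕ)%k + 2

lemma reachA {k : ℕ} (hk : 2 ≤ k) : ∀ r, r ≤ k → Reachable k 2 (cfgA k r) := by
  have hkpos : 0 < k := by omega
  intro r
  induction r with
  | zero =>
    intro _
    have : cfgA k 0 = (fun _ => 1) := by
      funext n
      simp [cfgA]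
    rw [this]
    exact Relation.ReflTransGen.refl
  | succ r ih =>
    intro hr
    refine Relation.ReflTransGen.tail (ih (by omega)) ?_
    have hbound : ∀ m : Fin k, r*k + (m:ℕ) < k^2 := by
      intro m
      have h1 : (r+1)*k ≤ k*k := Nat.mul_le_mul_right k hr
      rw [add_mul, one_mul] at h1
      have := m.isLt
      rw [pow_two]
      omega
    refine ⟨1, fun m => ⟨r*k + (m:ℕ), hbound m⟩, ?_, ?_, ?_, ?_⟩
    · intro a b hab
      have : (a:ℕ) < (b:ℕ) := hab
      exact Fin.mk_lt_mk.mpr (by omega)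
    · intro m
      simp only [cfgA]
      rw [if_neg (by omega)]
    · intro m
      simp only [cfgA]
      have h1 : (r+1)*k = r*k + k := by ring
      rw [if_pos (by rw [h1]; exact Nat.add_lt_add_left m.isLt _)]
      have h2 : (r*k + (m:ℕ)) % k = (m:ℕ) := by
        rw [mul_comm r k]
        exact (moddiv hkpos r (m:ℕ) m.isLt).1
      rw [h2]
      norm_num
    · intro i hne
      have hrange : ¬ (r*k ≤ (i:ℕ) ∧ (i:ℕ) < r*k + k) := by
        rintro ⟨ha, hb'⟩
        exact (hne ⟨(i:ℕ) - r*k, by omega⟩) (Fin.ext (by simp; omega))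
      simp only [cfgA]
      have h1 : (r+1)*k = r*k + k := by ring
      by_cases hcase : (i:ℕ) < r*k
      · rw [if_pos (by omega), if_pos hcase]
      · rw [if_neg (by omega), if_neg hcase]

lemma reachB {k : ℕ} (hk : 2 ≤ k) : ∀ s, s ≤ k → Reachable k 2 (cfgB k s) := by
  have hkpos : 0 < k := by omega
  intro s
  induction s with
  | zero =>
    intro _
    have : cfgB k 0 = cfgA k k := by
      funext n
      have h1 := n.isLt
      have e : k^2 = k*k := pow_two k
      have h0 : ¬ ((n:ℕ) % k < 0) := by omega
      have h2 : (n:ℕ) < k*k := by omega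
      simp only [cfgB, cfgA, if_neg h0, if_pos h2]
    rw [this]
    exact reachA hk k le_rfl
  | succ s ih =>
    intro hs
    have hsk : s < k := by omega
    refine Relation.ReflTransGen.tail (ih (by omega)) ?_
    have hbound : ∀ m : Fin k, (m:ℕ)*k + s < k^2 := by
      intro m
      have h1 : ((m:ℕ)+1)*k ≤ k*k := Nat.mul_le_mul_right k m.isLt
      rw [add_mul, one_mul] at h1
      rw [pow_two]
      omega
    have hmod : ∀ m : Fin k, ((m:ℕ)*k + s) % k = s := by
      intro m
      rw [mul_comm (m:ℕ) k]
      exact (moddiv hkpos (m:ℕ) s hsk).1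
    have hdiv : ∀ m : Fin k, ((m:ℕ)*k + s) / k = (m:ℕ) := by
      intro m
      rw [mul_comm (m:ℕ) k]
      exact (moddiv hkpos (m:ℕ) s hsk).2
    refine ⟨s + 2, fun m => ⟨(m:ℕ)*k + s, hbound m⟩, ?_, ?_, ?_, ?_⟩
    · intro a b hab
      have h1 : (a:ℕ) < (b:ℕ) := hab
      have h2 : (a:ℕ)*k < (b:ℕ)*k := (Nat.mul_lt_mul_right hkpos).mpr h1
      exact Fin.mk_lt_mk.mpr (by omega)
    · intro m
      simp only [cfgB]
      rw [hmod m, if_neg (by omega)]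
    · intro m
      simp only [cfgB]
      rw [hmod m, hdiv m, if_pos (by omega)]
      have h21 : s + 2 - 1 = s + 1 := by omega
      rw [h21]
    · intro i hne
      have hrange : (i:ℕ) % k ≠ s := by
        intro hes
        refine (hne ⟨(i:ℕ)/k, ?_⟩) (Fin.ext ?_)
        · have h := i.isLt
          have e : k^2 = k*k := pow_two k
          exact Nat.div_lt_of_lt_mul (by omega)
        · simp only
          have hdm := Nat.div_add_mod (i:ℕ) k
          rw [mul_comm ((i:ℕ)/k) k]
          omega
      simp only [cfgB]
      by_cases hcase : (i:ℕ) % k < s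
      · rw [if_pos (by omega), if_pos hcase]
      · rw [if_neg (by omega), if_neg hcase]

end Stmt16

namespace Stmt16

lemma divlt {k : ℕ} (hkpos : 0 < k) (p : Fin (k^2)) : (p:ℕ)/k < k := by
  have h := p.isLt
  have e : k^2 = k*k := pow_two k
  exact Nat.div_lt_of_lt_mul (by omega)

lemma tbound {k : ℕ} (hkpos : 0 < k) (p : Fin (k^2)) : k*((p:ℕ)%k) + (p:ℕ)/k < k^2 := by
  have e : k^2 = k*k := pow_two k
  have h1 : (p:ℕ)%k < k := Nat.mod_lt _ hkpos
  have h2 : (p:ℕ)/k < k := divlt hkpos p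
  have h3 : k*((p:ℕ)%k + 1) ≤ k*k := Nat.mul_le_mul_left k h1
  rw [Nat.mul_add, Nat.mul_one] at h3
  omega

def tperm (k : ℕ) (hkpos : 0 < k) : Equiv.Perm (Fin (k^2)) where
  toFun p := ⟨k*((p:ℕ)%k) + (p:ℕ)/k, tbound hkpos p⟩
  invFun p := ⟨k*((p:ℕ)%k) + (p:ℕ)/k, tbound hkpos p⟩
  left_inv p := by
    apply Fin.ext
    simp only
    have hb : (p:ℕ)/k < k := divlt hkpos p
    rw [(moddiv hkpos ((p:ℕ)%k) ((p:ℕ)/k) hb).1, (moddiv hkpos ((p:ℕ)%k) ((p:ℕ)/k) hb).2]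
    exact Nat.div_add_mod (p:ℕ) k
  right_inv p := by
    apply Fin.ext
    simp only
    have hb : (p:ℕ)/k < k := divlt hkpos p
    rw [(moddiv hkpos ((p:ℕ)%k) ((p:ℕ)/k) hb).1, (moddiv hkpos ((p:ℕ)%k) ((p:ℕ)/k) hb).2]
    exact Nat.div_add_mod (p:ℕ) k

lemma tperm_val {k : ℕ} (hkpos : 0 < k) (q : Fin (k^2)) :
    ((tperm k hkpos) q : ℕ) = k*((q:ℕ)%k) + (q:ℕ)/k := rfl

lemma cfgBk_form {k : ℕ} (hkpos : 0 < k) (n : Fin (k^2)) :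
    cfgB k k n = k*((n:ℕ)%k) + k + (n:ℕ)/k + 2 := by
  simp only [cfgB]
  rw [if_pos (Nat.mod_lt _ hkpos), Nat.mul_add, Nat.mul_one]

lemma cfgBk_inj {k : ℕ} (hkpos : 0 < k) : Function.Injective (cfgB k k) := by
  intro a b hab
  rw [cfgBk_form hkpos, cfgBk_form hkpos] at hab
  have ha2 : (a:ℕ)/k < k := divlt hkpos a
  have hb2 : (b:ℕ)/k < k := divlt hkpos b
  have hma := (moddiv hkpos ((a:ℕ)%k) ((a:ℕ)/k) ha2).1
  have hmb := (moddiv hkpos ((b:ℕ)%k) ((b:ℕ)/k) hb2).1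
  have hda := (moddiv hkpos ((a:ℕ)%k) ((a:ℕ)/k) ha2).2
  have hdb := (moddiv hkpos ((b:ℕ)%k) ((b:ℕ)/k) hb2).2
  have heq : k*((a:ℕ)%k) + (a:ℕ)/k = k*((b:ℕ)%k) + (b:ℕ)/k := by omega
  rw [heq] at hma hda
  have hdiveq : (a:ℕ)/k = (b:ℕ)/k := hma.symm.trans hmb
  have hmodeq : (a:ℕ)%k = (b:ℕ)%k := hda.symm.trans hdb
  have h3 : k*((a:ℕ)/k) = k*((b:ℕ)/k) := by rw [hdiveq]
  have h1 := Nat.div_add_mod (a:ℕ) k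
  have h2 := Nat.div_add_mod (b:ℕ) k
  apply Fin.ext
  omega

lemma stableBk {k : ℕ} (hk : 2 ≤ k) : Stable k (k^2) (cfgB k k) := by
  have hkpos : 0 < k := by omega
  intro w
  have h1 : (Finset.univ.filter (fun i => cfgB k k i = w)).card ≤ 1 := by
    apply Finset.card_le_one.mpr
    intro a ha b hb
    simp only [Finset.mem_filter, Finset.mem_univ, true_and] at ha hb
    exact cfgBk_inj hkpos (ha.trans hb.symm)
  omega

lemma layerStart2 (k : ℕ) : layerStart k 2 = k + 2 := by simp [layerStart]

lemma attainBk {k : ℕ} (hk : 2 ≤ k) : Attainable k 2 (tperm k (by omega : 0 < k)) := by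
  have hkpos : 0 < k := by omega
  refine ⟨cfgB k k, reachB hk k le_rfl, stableBk hk, ?_⟩
  intro p
  rw [layerStart2, cfgBk_form hkpos]
  have hb : (p:ℕ)/k < k := divlt hkpos p
  have hm := (moddiv hkpos ((p:ℕ)%k) ((p:ℕ)/k) hb).1
  have hd := (moddiv hkpos ((p:ℕ)%k) ((p:ℕ)/k) hb).2
  have hval : (((tperm k hkpos) p) : ℕ) = k*((p:ℕ)%k) + (p:ℕ)/k := rfl
  rw [hval, hm, hd]
  have := Nat.div_add_mod (p:ℕ) k
  omega

lemma decBk {k : ℕ} (hk : 2 ≤ k) :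
    HasDecSubseq (k^2) (fun p => ((tperm k (by omega : 0 < k)) p : ℕ)) k := by
  have hkpos : 0 < k := by omega
  have e : k^2 = k*k := pow_two k
  have hbound : ∀ a : Fin k, k*(a:ℕ) + (k - 1 - (a:ℕ)) < k^2 := by
    intro a
    have h1 : k*((a:ℕ)+1) ≤ k*k := Nat.mul_le_mul_left k a.isLt
    rw [Nat.mul_add, Nat.mul_one] at h1
    omega
  refine ⟨fun a => ⟨k*(a:ℕ) + (k - 1 - (a:ℕ)), hbound a⟩, ?_, ?_⟩
  · intro a b hab
    have h1 : (a:ℕ) < (b:ℕ) := hab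
    have h2 : k*((a:ℕ)+1) ≤ k*(b:ℕ) := Nat.mul_le_mul_left k h1
    rw [Nat.mul_add, Nat.mul_one] at h2
    have := b.isLt
    exact Fin.mk_lt_mk.mpr (by omega)
  · intro a b hab
    have h1 : (a:ℕ) < (b:ℕ) := hab
    have hbk := b.isLt
    have hak := a.isLt
    have hv : ∀ x : Fin k, ((tperm k hkpos) (⟨k*(x:ℕ) + (k - 1 - (x:ℕ)), hbound x⟩ : Fin (k^2)) : ℕ)
        = k*(k - 1 - (x:ℕ)) + (x:ℕ) := by
      intro x
      have hx : k - 1 - (x:ℕ) < k := by omega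
      rw [tperm_val]
      simp only
      rw [(moddiv hkpos (x:ℕ) (k - 1 - (x:ℕ)) hx).1, (moddiv hkpos (x:ℕ) (k - 1 - (x:ℕ)) hx).2]
    show ((tperm k hkpos) _ : ℕ) < ((tperm k hkpos) _ : ℕ)
    rw [hv a, hv b]
    have h3 : (k - 1 - (b:ℕ)) + 1 ≤ k - 1 - (a:ℕ) := by omega
    have h4 : k*((k - 1 - (b:ℕ)) + 1) ≤ k*(k - 1 - (a:ℕ)) := Nat.mul_le_mul_left k h3
    rw [Nat.mul_add, Nat.mul_one] at h4
    omega

theorem stmt16' (k : ℕ) (hk : 2 ≤ k) : Dmax k 2 = k := by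
  have hkpos : 0 < k := by omega
  have hmem : k ∈ {d | ∃ σ : Equiv.Perm (Fin (k ^ 2)), Attainable k 2 σ ∧
      HasDecSubseq (k ^ 2) (fun p => (σ p : ℕ)) d} :=
    ⟨tperm k hkpos, attainBk hk, decBk hk⟩
  have hub : ∀ d ∈ {d | ∃ σ : Equiv.Perm (Fin (k ^ 2)), Attainable k 2 σ ∧
      HasDecSubseq (k ^ 2) (fun p => (σ p : ℕ)) d}, d ≤ k := by
    rintro d ⟨σ', ha', hd'⟩
    exact upper hk ha' hd'
  apply le_antisymm
  · exact csSup_le ⟨k, hmem⟩ hub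
  · exact le_csSup ⟨k, hub⟩ hmem

end Stmt16

/-- `D_k(2) = k`: the maximum, over all permutations attainable from `k^2` chips, of the
length of the longest strictly decreasing subsequence equals `k`. -/
theorem stmt16 (k : ℕ) (hk : 2 ≤ k) : Dmax k 2 = k :=
  Stmt16.stmt16' k hk
end
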